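/- arXiv:1001.0612 — 8 statements merged into one kernel-verified Lean document; each statement's English description precedes it below -/
import Mathlib

section
/- Let Y be a nonnegative random variable with mean μ and variance σ², both finite and positive, and let Y^s, defined on the same probability space as Y, have the Y-size bias distribution and satisfy Y^s ≥ Y almost surely. Set W = (Y − μ)/σ and W^s = (Y^s − μ)/σ. Then for every z ∈ ℝ and every a > 0, (μ/σ)·E[(W^s − W)·1{W^s − W ≤ a}·1{z ≤ W ≤ z + a}] ≤ a. -/
/-!
Let `W = (Y - μ)/σ`, `Wˢ = (Yˢ - μ)/σ` and let `g` be `x ↦ (x - μ)/σ - (z + a)` clipped to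
`[-a, a]`. On the event in the integrand both `W` and `Wˢ` lie in `[z, z + 2a]`, where the clip
is inactive, so the integrand equals `g Yˢ - g Y`; off the event it vanishes, while
`g Yˢ - g Y ≥ 0` by monotonicity since `Yˢ ≥ Y`. The size bias identity turns
`μ (E g(Yˢ) - E g(Y))` into `E[(Y - μ) g(Y)] ≤ a E|Y - μ| ≤ a σ`.
-/

open MeasureTheory ProbabilityTheory

/-- `Ys` has the `Y`-size bias distribution:
`E[Y g(Y)] = (E Y) · E[g(Ys)]` for every bounded measurable `g`. -/
def HasSizeBias {Ω : Type*} [MeasurableSpace Ω] (P : Measure Ω) (Y Ys : Ω → ℝ) : Prop :=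
  ∀ g : ℝ → ℝ, Measurable g → (∃ C, ∀ x, |g x| ≤ C) →
    ∫ ω, Y ω * g (Y ω) ∂P = (∫ ω, Y ω ∂P) * ∫ ω, g (Ys ω) ∂P

def clip (h x : ℝ) : ℝ := max (-h) (min x h)

lemma clip_mono (h : ℝ) : Monotone (clip h) :=
  fun _ _ hxy => max_le_max le_rfl (min_le_min hxy le_rfl)

lemma continuous_clip (h : ℝ) : Continuous (clip h) := by
  unfold clip; fun_prop

lemma abs_clip_le {h : ℝ} (hh : 0 ≤ h) (x : ℝ) : |clip h x| ≤ h :=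
  abs_le.2 ⟨le_max_left _ _, max_le (by linarith) (min_le_right _ _)⟩

lemma clip_of_abs_le {h x : ℝ} (hx : |x| ≤ h) : clip h x = x := by
  obtain ⟨hlo, hhi⟩ := abs_le.1 hx
  rw [clip, min_eq_left hhi, max_eq_right hlo]

lemma ite_le_clip_sub_clip {w ws z a : ℝ} (hw : w ≤ ws) :
    (if ws - w ≤ a ∧ z ≤ w ∧ w ≤ z + a then ws - w else 0)
      ≤ clip a (ws - (z + a)) - clip a (w - (z + a)) := by
  split_ifs with hmem
  · obtain ⟨hgap, hz, hza⟩ := hmem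
    rw [clip_of_abs_le (abs_le.2 ⟨by linarith, by linarith⟩),
      clip_of_abs_le (abs_le.2 ⟨by linarith, by linarith⟩)]
    linarith
  · exact sub_nonneg.2 (clip_mono a (by linarith))

section Integrals

variable {Ω : Type*} [MeasurableSpace Ω] {P : Measure Ω}

lemma integral_mul_le_of_abs_le [IsFiniteMeasure P] {f g : Ω → ℝ} (hf : Integrable f P)
    (hg : AEStronglyMeasurable g P) {h : ℝ} (hgh : ∀ ω, |g ω| ≤ h) :
    ∫ ω, f ω * g ω ∂P ≤ h * ∫ ω, |f ω| ∂P := by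
  rw [← integral_const_mul]
  refine integral_mono (hf.mul_bdd hg (ae_of_all _ hgh)) (hf.abs.const_mul h) fun ω => ?_
  calc f ω * g ω ≤ |f ω * g ω| := le_abs_self _
    _ = |f ω| * |g ω| := abs_mul _ _
    _ ≤ h * |f ω| := by rw [mul_comm]; exact mul_le_mul_of_nonneg_right (hgh ω) (abs_nonneg _)

lemma integral_abs_sub_le_sqrt_variance [IsProbabilityMeasure P] {X : Ω → ℝ}
    (hX : MemLp X 2 P) : ∫ ω, |X ω - ∫ ω', X ω' ∂P| ∂P ≤ √(variance X P) := by
  refine (Real.le_sqrt (integral_nonneg fun _ => abs_nonneg _) (variance_nonneg X P)).2 ?_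
  have hdev : MemLp (fun ω => |X ω - ∫ ω', X ω' ∂P|) 2 P := (hX.sub (memLp_const _)).abs
  have hvar := variance_nonneg (fun ω => |X ω - ∫ ω', X ω' ∂P|) P
  rw [variance_eq_sub hdev] at hvar
  simp only [Pi.pow_apply, sq_abs] at hvar
  rw [variance_eq_integral hX.aemeasurable]
  simpa using hvar

lemma HasSizeBias.integral_sub_mean_mul_eq [IsFiniteMeasure P] {Y Ys : Ω → ℝ}
    (hsb : HasSizeBias P Y Ys) (hY : Integrable Y P) {g : ℝ → ℝ} (hg : Measurable g)
    {C : ℝ} (hgC : ∀ x, |g x| ≤ C) :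
    ∫ ω, (Y ω - ∫ ω', Y ω' ∂P) * g (Y ω) ∂P
      = (∫ ω, Y ω ∂P) * (∫ ω, g (Ys ω) ∂P - ∫ ω, g (Y ω) ∂P) := by
  have hgY : AEStronglyMeasurable (fun ω => g (Y ω)) P :=
    (hg.comp_aemeasurable hY.aemeasurable).aestronglyMeasurable
  have hgY_int : Integrable (fun ω => g (Y ω)) P := .of_bound hgY C (ae_of_all _ fun ω => hgC _)
  simp_rw [sub_mul]
  rw [integral_sub (hY.mul_bdd hgY (ae_of_all _ fun ω => hgC _)) (hgY_int.const_mul _),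
    integral_const_mul, hsb g hg ⟨C, hgC⟩, mul_sub]

lemma HasSizeBias.mean_mul_integral_sub_le [IsProbabilityMeasure P] {Y Ys : Ω → ℝ}
    (hsb : HasSizeBias P Y Ys) (hY : MemLp Y 2 P) {g : ℝ → ℝ} (hg : Measurable g)
    {a : ℝ} (hga : ∀ x, |g x| ≤ a) :
    (∫ ω, Y ω ∂P) * (∫ ω, g (Ys ω) ∂P - ∫ ω, g (Y ω) ∂P) ≤ a * √(variance Y P) := by
  have hY1 : Integrable Y P := hY.integrable one_le_two
  have ha : 0 ≤ a := (abs_nonneg _).trans (hga 0)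
  calc (∫ ω, Y ω ∂P) * (∫ ω, g (Ys ω) ∂P - ∫ ω, g (Y ω) ∂P)
      = ∫ ω, (Y ω - ∫ ω', Y ω' ∂P) * g (Y ω) ∂P :=
        (hsb.integral_sub_mean_mul_eq hY1 hg hga).symm
    _ ≤ a * ∫ ω, |Y ω - ∫ ω', Y ω' ∂P| ∂P :=
        integral_mul_le_of_abs_le (hY1.sub (integrable_const _))
          (hg.comp_aemeasurable hY1.aemeasurable).aestronglyMeasurable (fun _ => hga _)
    _ ≤ a * √(variance Y P) := by gcongr; exact integral_abs_sub_le_sqrt_variance hY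

end Integrals

theorem size_bias_concentration_general {Ω : Type} [MeasurableSpace Ω]
    (P : Measure Ω) [IsProbabilityMeasure P]
    (Y Ys : Ω → ℝ) (hYs : Measurable Ys)
    (hY2 : MemLp Y 2 P)
    (μ : ℝ) (hμ : μ = ∫ ω, Y ω ∂P) (hμpos : 0 < μ)
    (σ : ℝ) (hσpos : 0 < σ) (hσ2 : σ ^ 2 = variance Y P)
    (hsb : HasSizeBias P Y Ys)
    (hmono : ∀ᵐ ω ∂P, Y ω ≤ Ys ω) :
    ∀ z a : ℝ, 0 < a →
      μ / σ *
          ∫ ω, Set.indicator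
            {ω' | (Ys ω' - μ) / σ - (Y ω' - μ) / σ ≤ a ∧
                  z ≤ (Y ω' - μ) / σ ∧ (Y ω' - μ) / σ ≤ z + a}
            (fun ω' => (Ys ω' - μ) / σ - (Y ω' - μ) / σ) ω ∂P
        ≤ a := by
  intro z a ha
  set I : Ω → ℝ := fun ω => Set.indicator
    {ω' | (Ys ω' - μ) / σ - (Y ω' - μ) / σ ≤ a ∧ z ≤ (Y ω' - μ) / σ ∧ (Y ω' - μ) / σ ≤ z + a}
    (fun ω' => (Ys ω' - μ) / σ - (Y ω' - μ) / σ) ω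
  set g : ℝ → ℝ := fun x => clip a ((x - μ) / σ - (z + a))
  have hg : Measurable g := (continuous_clip a).measurable.comp (by fun_prop)
  have hga : ∀ x, |g x| ≤ a := fun x => abs_clip_le ha.le _
  have hg_int {X : Ω → ℝ} (hX : AEMeasurable X P) : Integrable (fun ω => g (X ω)) P :=
    .of_bound (hg.comp_aemeasurable hX).aestronglyMeasurable a (ae_of_all _ fun _ => hga _)
  have hgYs := hg_int hYs.aemeasurable
  have hgY := hg_int hY2.aemeasurable
  have hW : ∀ᵐ ω ∂P, (Y ω - μ) / σ ≤ (Ys ω - μ) / σ := by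
    filter_upwards [hmono] with ω hω
    gcongr
  have hI_nonneg : ∀ᵐ ω ∂P, 0 ≤ I ω := by
    filter_upwards [hW] with ω hω
    exact Set.indicator_nonneg (fun _ _ => sub_nonneg.2 hω) ω
  have hI_le : ∀ᵐ ω ∂P, I ω ≤ g (Ys ω) - g (Y ω) := by
    filter_upwards [hW] with ω hω
    simp only [I, Set.indicator_apply, Set.mem_ofPred_eq]
    exact ite_le_clip_sub_clip hω
  have hI_int : ∫ ω, I ω ∂P ≤ ∫ ω, g (Ys ω) ∂P - ∫ ω, g (Y ω) ∂P := by
    rw [← integral_sub hgYs hgY]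
    exact integral_mono_of_nonneg hI_nonneg (hgYs.sub hgY) hI_le
  calc μ / σ * ∫ ω, I ω ∂P
      ≤ μ / σ * (∫ ω, g (Ys ω) ∂P - ∫ ω, g (Y ω) ∂P) := by gcongr
    _ ≤ a := by
      rw [div_mul_eq_mul_div, div_le_iff₀ hσpos]
      have hcov := hsb.mean_mul_integral_sub_le hY2 hg hga
      rwa [← hμ, ← hσ2, Real.sqrt_sq hσpos.le] at hcov

/-- Concentration inequality for monotone size bias couplings. -/
theorem size_bias_concentration {Ω : Type} [MeasurableSpace Ω]
    (P : Measure Ω) [IsProbabilityMeasure P]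
    (Y Ys : Ω → ℝ) (hY : Measurable Y) (hYs : Measurable Ys)
    (hYnn : ∀ᵐ ω ∂P, 0 ≤ Y ω) (hY2 : MemLp Y 2 P)
    (μ : ℝ) (hμ : μ = ∫ ω, Y ω ∂P) (hμpos : 0 < μ)
    (σ : ℝ) (hσpos : 0 < σ) (hσ2 : σ ^ 2 = variance Y P)
    (hsb : HasSizeBias P Y Ys)
    (hmono : ∀ᵐ ω ∂P, Y ω ≤ Ys ω) :
    ∀ z a : ℝ, 0 < a →
      μ / σ *
          ∫ ω, Set.indicator
            {ω' | (Ys ω' - μ) / σ - (Y ω' - μ) / σ ≤ a ∧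
                  z ≤ (Y ω' - μ) / σ ∧ (Y ω' - μ) / σ ≤ z + a}
            (fun ω' => (Ys ω' - μ) / σ - (Y ω' - μ) / σ) ω ∂P
        ≤ a :=
  size_bias_concentration_general P Y Ys hYs hY2 μ hμ hμpos σ hσpos hσ2 hsb hmono
end

section
/- Let X_1,…,X_n be exchangeable {0,1}-valued random variables that are nontrivial (0 < P(X_1 = 1) < 1), and let X = Σ_{j=1}^n X_j. Fix i ∈ {1,…,n} and suppose (X^i_1,…,X^i_n) has the conditional distribution of (X_1,…,X_n) given X_i = 1. Then X^i = Σ_{j=1}^n X^i_j has the X-size bias distribution. Moreover, if for each i such variables (X^i_1,…,X^i_n) are given and I is a random index with values in {1,…,n} independent of all these variables, then the mixture X^I also has the X-size bias distribution. -/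
/-!
With `S = ∑ⱼ Xⱼ`, `E[S g(S)] = ∑ⱼ E[Xⱼ g(S)]`, and since `S` is a symmetric function of the
vector, exchangeability makes every summand equal to `E[Xᵢ g(S)] = P(Xᵢ = 1) E[g(S) | Xᵢ = 1]`.
Taking `g = 1` gives `E S = n P(Xᵢ = 1)`, whence `E[S g(S)] = E S · E g(Sⁱ)` for
`Sⁱ = ∑ⱼ Xⁱⱼ`. Only the law of the vector on the finite space `Bool^n` enters. For the mixture,
independence of `I` gives `E g(S^I) = ∑ᵢ P(I = i) E g(Sⁱ)`, a convex combination of equal terms.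
-/

open MeasureTheory ProbabilityTheory Finset

section Conditioning

variable {Ω α : Type*} [MeasurableSpace Ω] {μ : Measure Ω}

theorem measureReal_mul_integral_cond [IsFiniteMeasure μ] (s : Set Ω) (f : Ω → ℝ) :
    μ.real s * ∫ x, f x ∂μ[|s] = ∫ x in s, f x ∂μ := by
  rcases eq_or_ne (μ s) 0 with hs | hs
  · simp [Measure.real, hs, Measure.restrict_eq_zero.mpr hs]
  · rw [ProbabilityTheory.cond, integral_smul_measure, smul_eq_mul, ← mul_assoc, measureReal_def,
      ENNReal.toReal_inv, mul_inv_cancel₀ (ENNReal.toReal_ne_zero.mpr ⟨hs, measure_ne_top μ s⟩),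
      one_mul]

theorem map_cond_preimage [MeasurableSpace α] {f : Ω → α} (hf : Measurable f) {s : Set α}
    (hs : MeasurableSet s) : (μ[|f ⁻¹' s]).map f = (μ.map f)[|s] := by
  rw [ProbabilityTheory.cond, ProbabilityTheory.cond, Measure.map_smul, Measure.restrict_map hf hs,
    Measure.map_apply hf hs]

end Conditioning

section Exchangeable

variable {ι : Type*} [Fintype ι]

def trueCount (v : ι → Bool) : ℝ := ∑ j, if v j then 1 else 0

theorem trueCount_comp_perm (v : ι → Bool) (π : Equiv.Perm ι) :
    trueCount (v ∘ π) = trueCount v :=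
  Equiv.sum_comp π fun j => if v j then (1 : ℝ) else 0

theorem integral_ite_mul_eq_of_map_perm_eq [DecidableEq ι] {μ : Measure (ι → Bool)}
    (hμ : ∀ π : Equiv.Perm ι, μ.map (· ∘ π) = μ) {F : (ι → Bool) → ℝ}
    (hF : ∀ v (π : Equiv.Perm ι), F (v ∘ π) = F v) (i j : ι) :
    ∫ v, (if v j then 1 else 0) * F v ∂μ = ∫ v, (if v i then 1 else 0) * F v ∂μ := by
  conv_lhs => rw [← hμ (Equiv.swap i j)]
  rw [integral_map Measurable.of_discrete.aemeasurable Measurable.of_discrete.aestronglyMeasurable]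
  simp [hF]

theorem integral_trueCount_mul_eq {μ : Measure (ι → Bool)} [IsFiniteMeasure μ]
    (hμ : ∀ π : Equiv.Perm ι, μ.map (· ∘ π) = μ) {F : (ι → Bool) → ℝ}
    (hF : ∀ v (π : Equiv.Perm ι), F (v ∘ π) = F v) (i : ι) :
    ∫ v, trueCount v * F v ∂μ = Fintype.card ι * ∫ v in {v | v i = true}, F v ∂μ := by
  classical
  have hA : MeasurableSet {v : ι → Bool | v i = true} := MeasurableSet.of_discrete
  simp_rw [trueCount, sum_mul]
  rw [integral_finsetSum _ fun j _ => Integrable.of_finite, ← integral_indicator hA]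
  simp_rw [integral_ite_mul_eq_of_map_perm_eq hμ hF i]
  simp [Set.indicator_apply]

theorem integral_trueCount_mul_comp_eq {μ : Measure (ι → Bool)} [IsFiniteMeasure μ]
    (hμ : ∀ π : Equiv.Perm ι, μ.map (· ∘ π) = μ) (g : ℝ → ℝ) (i : ι) :
    ∫ v, trueCount v * g (trueCount v) ∂μ
      = (∫ v, trueCount v ∂μ) * ∫ v, g (trueCount v) ∂μ[|{v | v i = true}] := by
  have hmean : ∫ v, trueCount v ∂μ = Fintype.card ι * μ.real {v | v i = true} := by
    simpa using integral_trueCount_mul_eq hμ (F := fun _ => 1) (fun _ _ => rfl) i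
  rw [integral_trueCount_mul_eq hμ (fun v π => by rw [trueCount_comp_perm]) i, hmean, mul_assoc,
    measureReal_mul_integral_cond]

end Exchangeable

section Transfer

variable {Ω ι : Type*} [MeasurableSpace Ω] {P : Measure Ω} [Fintype ι]

theorem hasSizeBias_trueCount_of_map_eq_map_cond [IsFiniteMeasure P] {Z W : Ω → ι → Bool}
    (hZ : Measurable Z) (hW : Measurable W)
    (hexch : ∀ π : Equiv.Perm ι, P.map (fun ω => Z ω ∘ π) = P.map Z) (i : ι)
    (hcond : P.map W = (P[|Z ⁻¹' {v | v i = true}]).map Z) :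
    HasSizeBias P (fun ω => trueCount (Z ω)) (fun ω => trueCount (W ω)) := by
  intro g _ _
  have hμ : ∀ π : Equiv.Perm ι, (P.map Z).map (· ∘ π) = P.map Z := fun π => by
    rw [Measure.map_map Measurable.of_discrete hZ]; exact hexch π
  have key := integral_trueCount_mul_comp_eq hμ g i
  rw [← map_cond_preimage hZ MeasurableSet.of_discrete, ← hcond] at key
  simpa only [integral_map hZ.aemeasurable Measurable.of_discrete.aestronglyMeasurable,
    integral_map hW.aemeasurable Measurable.of_discrete.aestronglyMeasurable] using key

end Transfer

section Mixture

variable {Ω ι : Type*} [MeasurableSpace Ω] {P : Measure Ω} [Fintype ι] [MeasurableSpace ι]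
  [MeasurableSingletonClass ι]

theorem integral_comp_eq_sum_measureReal_mul [IsFiniteMeasure P] {Y : ι → Ω → ℝ}
    (hY : ∀ i, Measurable (Y i)) {I : Ω → ι} (hI : Measurable I)
    (hind : IndepFun I (fun ω i => Y i ω) P) {g : ℝ → ℝ} (hg : Measurable g)
    (hgb : ∃ C, ∀ x, |g x| ≤ C) :
    ∫ ω, g (Y (I ω) ω) ∂P = ∑ i, P.real (I ⁻¹' {i}) * ∫ ω, g (Y i ω) ∂P := by
  classical
  obtain ⟨C, hC⟩ := hgb
  have hC0 : 0 ≤ C := (abs_nonneg _).trans (hC 0)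
  have hsplit : ∀ ω, g (Y (I ω) ω) = ∑ i, (if I ω = i then 1 else 0) * g (Y i ω) := fun ω => by
    simp [ite_mul]
  have hmeas_ite : ∀ i, Measurable fun ω => if I ω = i then (1 : ℝ) else 0 := fun i =>
    (Measurable.of_discrete (f := fun k : ι => if k = i then (1 : ℝ) else 0)).comp hI
  have hint : ∀ i, Integrable (fun ω => (if I ω = i then 1 else 0) * g (Y i ω)) P := fun i =>
    Integrable.of_bound ((hmeas_ite i).mul (hg.comp (hY i))).aestronglyMeasurable C
      (ae_of_all _ fun ω => by by_cases h : I ω = i <;> simp [h, hC, hC0])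
  have hfactor : ∀ i, ∫ ω, (if I ω = i then 1 else 0) * g (Y i ω) ∂P
      = P.real (I ⁻¹' {i}) * ∫ ω, g (Y i ω) ∂P := fun i => by
    have hind_i : IndepFun (fun ω => if I ω = i then (1 : ℝ) else 0) (fun ω => g (Y i ω)) P :=
      hind.comp (φ := fun k => if k = i then (1 : ℝ) else 0) Measurable.of_discrete
        (hg.comp (measurable_pi_apply i))
    have hprob : ∫ ω, (if I ω = i then (1 : ℝ) else 0) ∂P = P.real (I ⁻¹' {i}) := by
      rw [← integral_indicator_one (hI (measurableSet_singleton i))]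
      rfl
    rw [← hprob]
    exact hind_i.integral_mul_eq_mul_integral (hmeas_ite i).aestronglyMeasurable
      (hg.comp (hY i)).aestronglyMeasurable
  simp_rw [hsplit]
  rw [integral_finsetSum _ fun i _ => hint i]
  simp_rw [hfactor]

theorem hasSizeBias_mixture [IsProbabilityMeasure P] {Y : Ω → ℝ} {Ys : ι → Ω → ℝ}
    (h : ∀ i, HasSizeBias P Y (Ys i)) (hYs : ∀ i, Measurable (Ys i)) {I : Ω → ι}
    (hI : Measurable I) (hind : IndepFun I (fun ω i => Ys i ω) P) :
    HasSizeBias P Y (fun ω => Ys (I ω) ω) := by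
  intro g hg hgb
  have hI_total : ∑ i, P.real (I ⁻¹' {i}) = 1 := by
    rw [sum_measureReal_preimage_singleton _ fun i _ => hI (measurableSet_singleton i)]
    simp
  rw [integral_comp_eq_sum_measureReal_mul hYs hI hind hg hgb, mul_sum]
  simp_rw [mul_left_comm _ (P.real _), ← h _ g hg hgb, ← sum_mul, hI_total, one_mul]

end Mixture

theorem size_bias_exchangeable_sum_general {n : ℕ}
    {Ω : Type} [MeasurableSpace Ω] (P : Measure Ω) [IsProbabilityMeasure P]
    (X : Fin n → Ω → Bool) (hXm : ∀ j, Measurable (X j))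
    (hexch : ∀ π : Equiv.Perm (Fin n),
      Measure.map (fun ω => fun j => X (π j) ω) P = Measure.map (fun ω => fun j => X j ω) P)
    (Xc : Fin n → Fin n → Ω → Bool) (hXcm : ∀ i j, Measurable (Xc i j))
    (hcond : ∀ i, Measure.map (fun ω => fun j => Xc i j ω) P
      = Measure.map (fun ω => fun j => X j ω) (P[|{ω | X i ω = true}]))
    (I : Ω → Fin n) (hIm : Measurable I)
    (hindep : IndepFun I (fun ω => ((fun i j => Xc i j ω), fun j => X j ω)) P) :
    (∀ i, HasSizeBias P (fun ω => ∑ j, (if X j ω then (1 : ℝ) else 0))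
        (fun ω => ∑ j, (if Xc i j ω then (1 : ℝ) else 0))) ∧
    HasSizeBias P (fun ω => ∑ j, (if X j ω then (1 : ℝ) else 0))
        (fun ω => ∑ j, (if Xc (I ω) j ω then (1 : ℝ) else 0)) := by
  have hXc : ∀ i, Measurable fun ω j => Xc i j ω := fun i => measurable_pi_lambda _ (hXcm i)
  have hbias (i : Fin n) : HasSizeBias P (fun ω => trueCount fun j => X j ω)
      (fun ω => trueCount fun j => Xc i j ω) :=
    hasSizeBias_trueCount_of_map_eq_map_cond (measurable_pi_lambda _ hXm) (hXc i) hexch i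
      (hcond i)
  have hindep_counts : IndepFun I (fun ω i => trueCount fun j => Xc i j ω) P :=
    hindep.comp measurable_id (Measurable.of_discrete
      (f := fun (p : (Fin n → Fin n → Bool) × (Fin n → Bool)) i => trueCount (p.1 i)))
  have hcounts : ∀ i, Measurable fun ω => trueCount fun j => Xc i j ω := fun i =>
    (Measurable.of_discrete (f := trueCount (ι := Fin n))).comp (hXc i)
  exact ⟨hbias, hasSizeBias_mixture hbias hcounts hIm hindep_counts⟩

/-- Size biasing a sum of nontrivial exchangeable Bernoulli variables: conditioning the
`i`-th coordinate to be one gives the size bias distribution of the sum, as does any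
independent mixture of such conditioned vectors. -/
theorem size_bias_exchangeable_sum {n : ℕ}
    {Ω : Type} [MeasurableSpace Ω] (P : Measure Ω) [IsProbabilityMeasure P]
    (X : Fin n → Ω → Bool) (hXm : ∀ j, Measurable (X j))
    (hexch : ∀ π : Equiv.Perm (Fin n),
      Measure.map (fun ω => fun j => X (π j) ω) P = Measure.map (fun ω => fun j => X j ω) P)
    (hnontriv : ∀ j, 0 < P {ω | X j ω = true} ∧ P {ω | X j ω = true} < 1)
    (Xc : Fin n → Fin n → Ω → Bool) (hXcm : ∀ i j, Measurable (Xc i j))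
    (hcond : ∀ i, Measure.map (fun ω => fun j => Xc i j ω) P
      = Measure.map (fun ω => fun j => X j ω) (P[|{ω | X i ω = true}]))
    (I : Ω → Fin n) (hIm : Measurable I)
    (hindep : IndepFun I (fun ω => ((fun i j => Xc i j ω), fun j => X j ω)) P) :
    (∀ i, HasSizeBias P (fun ω => ∑ j, (if X j ω then (1 : ℝ) else 0))
        (fun ω => ∑ j, (if Xc i j ω then (1 : ℝ) else 0))) ∧
    HasSizeBias P (fun ω => ∑ j, (if X j ω then (1 : ℝ) else 0))
        (fun ω => ∑ j, (if Xc (I ω) j ω then (1 : ℝ) else 0)) :=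
  size_bias_exchangeable_sum_general P X hXm hexch Xc hXcm hcond I hIm hindep
end

section
/- Let n be even, let 𝐗 = (X_{rj})_{1≤r,j≤n} be the switch variables of the standard lightbulb process on n bulbs, and fix i ∈ {1,…,n}. Define a random array 𝐗^i as follows: if X_i = 1 (bulb i is on at the terminal time) set 𝐗^i = 𝐗; otherwise, conditionally on 𝐗, choose J uniformly from the set {j : X_{n/2,j} = 1 − X_{n/2,i}} and let 𝐗^i be 𝐗 with the two entries X_{n/2,i} and X_{n/2,J} interchanged (all other entries unchanged). Then the distribution of 𝐗^i equals the conditional distribution of 𝐗 given X_i = 1. -/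
/-!
Let `μ` be the joint law of the array and the chosen bulb `J`, and let `σ` swap the stage-`n/2`
entries of bulbs `i` and `J`. Swapping preserves the stage sums, and since stage `n/2` toggles
exactly half of the bulbs, every admissible array has `n/2` admissible choices of `J` before and
after the swap; so `σ` preserves `μ`. As the swapped entries differ `μ`-a.e., `σ` toggles bulb
`i`, i.e. it exchanges the event `S = {bulb i on}` with its complement. For any such
measure-preserving `σ`, the map "identity on `S`, `σ` off `S`" pushes `μ` to
`2 • μ.restrict S = μ[|S]`; projecting onto the array gives the claim.
-/

open MeasureTheory ProbabilityTheory Finset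

/-- The arrays of switch variables having exactly `s r` switches in stage `r`. -/
def validArrays (n k : ℕ) (s : Fin k → ℕ) : Finset (Fin k → Fin n → Bool) :=
  Finset.univ.filter (fun e => ∀ r, (Finset.univ.filter (fun j => e r j = true)).card = s r)

/-- Terminal state of bulb `j` (all bulbs initially off). -/
def bulbOn {n k : ℕ} (e : Fin k → Fin n → Bool) (j : Fin n) : Bool :=
  decide ((Finset.univ.filter (fun r => e r j = true)).card % 2 = 1)

/-- The standard switch pattern `𝐧 = (1,…,n)`: stage `r` toggles `r+1` bulbs for `r : Fin n`. -/
def stdPattern (n : ℕ) : Fin n → ℕ := fun r => (r : ℕ) + 1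

section

variable {α : Type*} [MeasurableSpace α] {μ : Measure α} {σ : α → α} {s : Set α}

theorem MeasureTheory.MeasurePreserving.map_piecewise_id_eq_two_smul_restrict
    [DecidablePred (· ∈ s)] (hσ : MeasurePreserving σ μ μ) (hs : MeasurableSet s) (hflip : σ ⁻¹' s =ᵐ[μ] sᶜ) :
    μ.map (s.piecewise id σ) = (2 : ENNReal) • μ.restrict s := by
  ext t ht
  have hflip_t : μ (σ ⁻¹' (t ∩ s)) = μ (σ ⁻¹' t \ s) :=
    measure_congr ((Filter.EventuallyEq.refl _ (σ ⁻¹' t)).inter hflip)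
  rw [Measure.map_apply (measurable_id.piecewise hs hσ.measurable) ht, Set.piecewise_preimage,
    Set.ite, measure_union (Set.disjoint_sdiff_right.mono_left Set.inter_subset_right)
      ((hσ.measurable ht).diff hs), ← hflip_t,
    hσ.measure_preimage (ht.inter hs).nullMeasurableSet, Set.preimage_id,
    Measure.smul_apply, Measure.restrict_apply ht, two_smul]

theorem MeasureTheory.MeasurePreserving.measure_eq_inv_two [IsProbabilityMeasure μ]
    (hσ : MeasurePreserving σ μ μ) (hs : MeasurableSet s) (hflip : σ ⁻¹' s =ᵐ[μ] sᶜ) :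
    μ s = 2⁻¹ := by
  have hcompl : μ sᶜ = μ s :=
    (measure_congr hflip).symm.trans (hσ.measure_preimage hs.nullMeasurableSet)
  have hsum := prob_add_prob_compl (μ := μ) hs
  rw [hcompl, ← two_mul] at hsum
  exact ENNReal.eq_inv_of_mul_eq_one_left (by rwa [mul_comm])

theorem MeasureTheory.MeasurePreserving.map_piecewise_id_eq_cond [IsProbabilityMeasure μ]
    [DecidablePred (· ∈ s)]
    (hσ : MeasurePreserving σ μ μ) (hs : MeasurableSet s) (hflip : σ ⁻¹' s =ᵐ[μ] sᶜ) :
    μ.map (s.piecewise id σ) = μ[|s] := by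
  rw [hσ.map_piecewise_id_eq_two_smul_restrict hs hflip, ProbabilityTheory.cond,
    hσ.measure_eq_inv_two hs hflip, inv_inv]

theorem Function.Involutive.measurePreserving [Countable α] [MeasurableSingletonClass α]
    (hσ : Function.Involutive σ) (h : ∀ x, μ {σ x} = μ {x}) : MeasurePreserving σ μ μ := by
  refine ⟨measurable_of_countable σ, Measure.ext_iff_singleton.mpr fun x => ?_⟩
  have : σ ⁻¹' {x} = {σ x} := Set.ext fun y => hσ.eq_iff
  rw [Measure.map_apply (measurable_of_countable σ) (measurableSet_singleton x), this, h]

end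

theorem ProbabilityTheory.cond_map {Ω β : Type*} [MeasurableSpace Ω] [MeasurableSpace β]
    {μ : Measure Ω} {f : Ω → β} (hf : Measurable f) {s : Set β} (hs : MeasurableSet s) :
    (μ.map f)[|s] = (μ[|f ⁻¹' s]).map f := by
  rw [ProbabilityTheory.cond, ProbabilityTheory.cond, Measure.map_apply hf hs,
    Measure.restrict_map hf hs, Measure.map_smul]

section SwitchArrays

variable {n k : ℕ}

def swapRow (r : Fin k) (i j : Fin n) (f : Fin k → Fin n → Bool) : Fin k → Fin n → Bool :=
  fun r' j' => if r' = r then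
    (if j' = i then f r j else if j' = j then f r i else f r j')
  else f r' j'

theorem swapRow_eq_update (r : Fin k) (i j : Fin n) (f : Fin k → Fin n → Bool) :
    swapRow r i j f = Function.update f r (f r ∘ Equiv.swap i j) := by
  funext r' j'
  by_cases hr : r' = r
  · subst hr
    simp only [swapRow, if_true, Function.update_self, Function.comp_apply,
      Equiv.swap_apply_def]
    split_ifs <;> simp_all
  · simp [swapRow, hr]

theorem swapRow_apply_self (r : Fin k) (i j : Fin n) (f : Fin k → Fin n → Bool) :
    swapRow r i j f r = f r ∘ Equiv.swap i j := by
  rw [swapRow_eq_update, Function.update_self]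

theorem swapRow_apply_of_ne {r r' : Fin k} (h : r' ≠ r) (i j : Fin n)
    (f : Fin k → Fin n → Bool) : swapRow r i j f r' = f r' := by
  rw [swapRow_eq_update, Function.update_of_ne h]

theorem swapRow_involutive (r : Fin k) (i j : Fin n) : Function.Involutive (swapRow r i j) := by
  intro f
  funext r' j'
  by_cases hr : r' = r
  · subst hr
    simp only [swapRow_apply_self, Function.comp_apply, Equiv.swap_apply_self]
  · simp only [swapRow_apply_of_ne hr]

theorem swapRow_eq_self {r : Fin k} {i j : Fin n} {f : Fin k → Fin n → Bool}
    (h : f r i = f r j) : swapRow r i j f = f := by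
  rw [swapRow_eq_update, Function.update_eq_self_iff]
  funext x
  simp only [Function.comp_apply, Equiv.swap_apply_def]
  split_ifs with hi hj
  · rw [hi, h]
  · rw [hj, h]
  · rfl

theorem swapRow_mem_validArrays_iff {r : Fin k} {i j : Fin n} {s : Fin k → ℕ}
    {f : Fin k → Fin n → Bool} : swapRow r i j f ∈ validArrays n k s ↔ f ∈ validArrays n k s := by
  have card_row : ∀ r', #{j' | swapRow r i j f r' j' = true} = #{j' | f r' j' = true} := by
    intro r'
    by_cases hr : r' = r
    · subst hr
      exact Finset.card_equiv (Equiv.swap i j) (by simp [swapRow_apply_self])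
    · simp only [swapRow_apply_of_ne hr]
  simp only [validArrays, Finset.mem_filter, Finset.mem_univ, true_and, card_row]

theorem card_filter_row_eq_of_two_mul {s : Fin k → ℕ} {e : Fin k → Fin n → Bool}
    (he : e ∈ validArrays n k s) {r : Fin k} (hr : 2 * s r = n) (b : Bool) :
    #{j | e r j = b} = s r := by
  have htrue : #{j | e r j = true} = s r := (Finset.mem_filter.mp he).2 r
  cases b
  · have hsplit := Finset.card_filter_add_card_filter_not (s := Finset.univ) (fun j => e r j = true)
    simp only [Finset.card_univ, Fintype.card_fin, htrue, Bool.not_eq_true] at hsplit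
    omega
  · exact htrue

theorem bulbOn_eq_not_of_single_flip {r : Fin k} {i : Fin n} {f g : Fin k → Fin n → Bool}
    (h_ne : ∀ r', r' ≠ r → g r' i = f r' i) (h_eq : g r i = !f r i) :
    bulbOn g i = !bulbOn f i := by
  unfold bulbOn
  rw [Finset.card_filter, Finset.card_filter, ← Finset.add_sum_erase _ _ (Finset.mem_univ r),
    ← Finset.add_sum_erase _ _ (Finset.mem_univ r),
    Finset.sum_congr rfl fun r' hr' => by rw [h_ne r' (Finset.ne_of_mem_erase hr')], h_eq,
    ← decide_not, decide_eq_decide]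
  cases f r i <;>
    simp only [Bool.not_false, Bool.not_true, Bool.false_eq_true, ↓reduceIte, sum_boole,
      Nat.cast_id, zero_add, Nat.mod_two_not_eq_one] <;> omega

theorem bulbOn_swapRow {r : Fin k} {i j : Fin n} {f : Fin k → Fin n → Bool}
    (h : f r j = !f r i) : bulbOn (swapRow r i j f) i = !bulbOn f i :=
  bulbOn_eq_not_of_single_flip (fun _ hr' => by rw [swapRow_apply_of_ne hr'])
    (by rw [swapRow_apply_self, Function.comp_apply, Equiv.swap_apply_left, h])

end SwitchArrays

section Coupling

variable {Ω : Type*} [MeasurableSpace Ω] {P : Measure Ω}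

theorem map_prodMk_apply_singleton {α β : Type*} [MeasurableSpace α] [MeasurableSpace β]
    [MeasurableSingletonClass α] [MeasurableSingletonClass β] {A : Ω → α} {J : Ω → β}
    (hA : Measurable A) (hJ : Measurable J) (a : α) (b : β) :
    P.map (fun ω => (A ω, J ω)) {(a, b)} = P {ω | A ω = a ∧ J ω = b} := by
  rw [Measure.map_apply (hA.prodMk hJ) (measurableSet_singleton _)]
  simp only [Set.preimage, Set.mem_singleton_iff, Prod.mk.injEq]

variable {n k : ℕ} {A : Ω → Fin k → Fin n → Bool} {J : Ω → Fin n} {r : Fin k} {i : Fin n}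

def swapAt (r : Fin k) (i : Fin n) (x : (Fin k → Fin n → Bool) × Fin n) :
    (Fin k → Fin n → Bool) × Fin n :=
  (swapRow r i x.2 x.1, x.2)

theorem swapAt_involutive (r : Fin k) (i : Fin n) : Function.Involutive (swapAt r i) :=
  fun x => Prod.ext (swapRow_involutive r i x.2 x.1) rfl

theorem measurePreserving_swapAt {s : Fin k → ℕ} {c : ENNReal} (hA : Measurable A)
    (hJ : Measurable J) (hr : 2 * s r = n)
    (hdist : ∀ e, P {ω | A ω = e} = if e ∈ validArrays n k s then c else 0)
    (hJdist : ∀ e (j : Fin n),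
      P {ω | A ω = e ∧ J ω = j}
        = P {ω | A ω = e} *
          (if e r j = !(e r i)
           then ((Finset.univ.filter (fun j' => e r j' = !(e r i))).card : ENNReal)⁻¹
           else 0)) :
    MeasurePreserving (swapAt r i) (P.map fun ω => (A ω, J ω)) (P.map fun ω => (A ω, J ω)) := by
  refine (swapAt_involutive r i).measurePreserving fun ⟨f, j⟩ => ?_
  rw [swapAt, map_prodMk_apply_singleton hA hJ, map_prodMk_apply_singleton hA hJ]
  by_cases hopp : f r j = !(f r i)
  · have hopp' : swapRow r i j f r j = !(swapRow r i j f r i) := by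
      simp only [swapRow_apply_self, Function.comp_apply, Equiv.swap_apply_left,
        Equiv.swap_apply_right, hopp, Bool.not_not]
    rw [hJdist, hJdist, hdist, hdist, if_pos hopp, if_pos hopp']
    simp only [swapRow_mem_validArrays_iff]
    by_cases hf : f ∈ validArrays n k s
    · rw [card_filter_row_eq_of_two_mul (swapRow_mem_validArrays_iff.mpr hf) hr,
        card_filter_row_eq_of_two_mul hf hr]
    · simp only [if_neg hf, zero_mul]
  · rw [swapRow_eq_self (by simpa using hopp : f r j = f r i).symm]

theorem swapAt_preimage_bulbOn_ae_eq_compl (hA : Measurable A) (hJ : Measurable J)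
    (hJdist : ∀ e (j : Fin n),
      P {ω | A ω = e ∧ J ω = j}
        = P {ω | A ω = e} *
          (if e r j = !(e r i)
           then ((Finset.univ.filter (fun j' => e r j' = !(e r i))).card : ENNReal)⁻¹
           else 0)) :
    swapAt r i ⁻¹' {x | bulbOn x.1 i = true}
      =ᵐ[P.map fun ω => (A ω, J ω)] {x | bulbOn x.1 i = true}ᶜ := by
  refine Filter.eventuallyEq_set.mpr (ae_iff_of_countable.mpr fun ⟨f, j⟩ hfj => ?_)
  have hopp : f r j = !(f r i) := by
    by_contra h
    rw [map_prodMk_apply_singleton hA hJ, hJdist, if_neg h, mul_zero] at hfj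
    exact hfj rfl
  change bulbOn (swapRow r i j f) i = true ↔ ¬bulbOn f i = true
  rw [bulbOn_swapRow hopp, Bool.not_eq_true', Bool.not_eq_true]

end Coupling

theorem lightbulb_conditioned_array_even_general {n : ℕ} (hne : Even n)
    {Ω : Type} [MeasurableSpace Ω] (P : Measure Ω) [IsProbabilityMeasure P]
    (A : Ω → (Fin n → Fin n → Bool)) (hA : Measurable A)
    (hdist : ∀ e, P {ω | A ω = e} =
      if e ∈ validArrays n n (stdPattern n)
      then ((validArrays n n (stdPattern n)).card : ENNReal)⁻¹ else 0)
    (i : Fin n) (half : Fin n) (hhalf : (half : ℕ) + 1 = n / 2)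
    (J : Ω → Fin n) (hJ : Measurable J)
    (hJdist : ∀ e (j : Fin n),
      P {ω | A ω = e ∧ J ω = j}
        = P {ω | A ω = e} *
          (if e half j = !(e half i)
           then ((Finset.univ.filter (fun j' => e half j' = !(e half i))).card : ENNReal)⁻¹
           else 0)) :
    Measure.map
      (fun ω =>
        if bulbOn (A ω) i then A ω
        else fun r j' =>
          if r = half then
            (if j' = i then A ω half (J ω)
             else if j' = J ω then A ω half i
             else A ω half j')
          else A ω r j') P
    = Measure.map A (P[|{ω | bulbOn (A ω) i = true}]) := by
  have hAJ : Measurable fun ω => (A ω, J ω) := hA.prodMk hJ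
  have : IsProbabilityMeasure (P.map fun ω => (A ω, J ω)) :=
    Measure.isProbabilityMeasure_map hAJ.aemeasurable
  set S : Set ((Fin n → Fin n → Bool) × Fin n) := {x | bulbOn x.1 i = true}
  have hS : MeasurableSet S := S.to_countable.measurableSet
  have hrow : 2 * stdPattern n half = n := by
    rw [stdPattern, hhalf, Nat.two_mul_div_two_of_even hne]
  calc _ = ((P.map fun ω => (A ω, J ω)).map (S.piecewise id (swapAt half i))).map Prod.fst := by
        rw [Measure.map_map measurable_fst (measurable_of_countable _),
          Measure.map_map (measurable_of_countable _) hAJ]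
        congr 1
        funext ω
        simp only [Function.comp_apply, Set.piecewise, S, Set.mem_ofPred_eq]
        split_ifs <;> rfl
    _ = ((P.map fun ω => (A ω, J ω))[|S]).map Prod.fst := by
        rw [(measurePreserving_swapAt hA hJ hrow hdist hJdist).map_piecewise_id_eq_cond hS
          (swapAt_preimage_bulbOn_ae_eq_compl hA hJ hJdist)]
    _ = _ := by
        rw [cond_map hAJ hS, Measure.map_map measurable_fst hAJ]
        rfl

/-- The lightbulb coupling construction: if bulb `i` is on at the terminal time do nothing;
otherwise interchange, in the stage with `n/2` switches, the switch variable of bulb `i`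
with that of a uniformly chosen bulb `J` whose stage-`n/2` switch value is opposite to
that of bulb `i`.  The resulting array has the conditional distribution of the switch
array given that bulb `i` ends up on. -/
theorem lightbulb_conditioned_array_even {n : ℕ} (hne : Even n) (hpos : 0 < n)
    {Ω : Type} [MeasurableSpace Ω] (P : Measure Ω) [IsProbabilityMeasure P]
    (A : Ω → (Fin n → Fin n → Bool)) (hA : Measurable A)
    (hdist : ∀ e, P {ω | A ω = e} =
      if e ∈ validArrays n n (stdPattern n)
      then ((validArrays n n (stdPattern n)).card : ENNReal)⁻¹ else 0)
    (i : Fin n) (half : Fin n) (hhalf : (half : ℕ) + 1 = n / 2)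
    (J : Ω → Fin n) (hJ : Measurable J)
    (hJdist : ∀ e (j : Fin n),
      P {ω | A ω = e ∧ J ω = j}
        = P {ω | A ω = e} *
          (if e half j = !(e half i)
           then ((Finset.univ.filter (fun j' => e half j' = !(e half i))).card : ENNReal)⁻¹
           else 0)) :
    Measure.map
      (fun ω =>
        if bulbOn (A ω) i then A ω
        else fun r j' =>
          if r = half then
            (if j' = i then A ω half (J ω)
             else if j' = J ω then A ω half i
             else A ω half j')
          else A ω r j') P
    = Measure.map A (P[|{ω | bulbOn (A ω) i = true}]) :=
  lightbulb_conditioned_array_even_general hne P A hA hdist i half hhalf J hJ hJdist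
end

section
/- Let n = 2m+1 be odd and let V be the number of bulbs on at the terminal time under the equal mixture (weight 1/4 each, over (a,b) ∈ {0,1}²) of lightbulb processes on n bulbs with switch pattern 𝐧(a,b) = (1,…,m−1, m+a, m+b, m+2,…,n) and all bulbs initially off. Then there exist, on a common probability space, random variables V' and V^s such that V' has the same distribution as V, V^s has the V'-size bias distribution, and V^s − V' ∈ {0, 1, 2} almost surely; in particular V' ≤ V^s ≤ V' + 2 almost surely. -/
open MeasureTheory ProbabilityTheory Finset

/-- Number of bulbs on at the terminal time. -/
def numOn {n k : ℕ} (e : Fin k → Fin n → Bool) : ℕ :=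
  (Finset.univ.filter (fun j => bulbOn e j = true)).card

/-- The switch pattern `𝐧(a,b) = (1,…,m−1, m+a, m+b, m+2,…,n)` for `n = 2m+1` odd. -/
def oddPattern (n m a b : ℕ) : Fin n → ℕ := fun r =>
  if (r : ℕ) + 1 = m then m + a
  else if (r : ℕ) + 1 = m + 1 then m + b
  else (r : ℕ) + 1

/-!
The four patterns `𝐧(a,b)` have equally many arrays, since complementing the switch set of one of
the two middle stages exchanges `m` and `m + 1 = n - m` switches. Hence the mixture is the uniform
law on the set `S` of arrays whose two middle stages carry `m` or `m + 1` switches and whose other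
stages follow `1, …, n`. The set `S` is invariant under permutations of the bulbs, so
`E[V g(V)] = n E[X₀ g(V)]`, and `V` restricted to the arrays of `S` with bulb `0` on is size biased.

The coupling keeps an array whose bulb `0` is on; otherwise it picks one of the two middle stages
and toggles its switch at bulb `0` together with the switch at one further bulb (or at no further
bulb) so that the stage keeps `m` or `m + 1` switches. A balanced stage admits exactly `m + 1` such
toggles, so these moves form a regular bipartite graph between the arrays of `S` with bulb `0` off
and those with bulb `0` on, and a uniform array with bulb `0` off is moved to a uniform array with
bulb `0` on. A move turns bulb `0` on and changes at most one other bulb, whence `V ≤ Vˢ ≤ V + 2`.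
-/

open scoped ENNReal

namespace PMF

variable {α β : Type*} [Fintype α]

noncomputable def ofNatWeights (w : α → ℕ) (hw : ∑ a, w a ≠ 0) : PMF α :=
  ofFintype (fun a => w a / ∑ b, (w b : ℝ≥0∞)) <| by
    simp only [div_eq_mul_inv, ← sum_mul, ← Nat.cast_sum]
    exact ENNReal.mul_inv_cancel (by exact_mod_cast hw) (ENNReal.natCast_ne_top _)

lemma ofNatWeights_apply (w : α → ℕ) (hw : ∑ a, w a ≠ 0) (a : α) :
    ofNatWeights w hw a = w a / ∑ b, (w b : ℝ≥0∞) := rfl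

lemma map_ofNatWeights_eq_uniformOfFinset [Fintype β] [DecidableEq β] {w : α → ℕ}
    (hw : ∑ a, w a ≠ 0) (f : α → β) {S : Finset β} (hS : S.Nonempty) {c : ℕ}
    (hfib : ∀ b, ∑ a with f a = b, w a = if b ∈ S then c else 0) :
    (ofNatWeights w hw).map f = uniformOfFinset S hS := by
  have htotal : ∑ a, w a = c * S.card := by
    rw [← sum_fiberwise univ f w]
    simp [hfib, sum_ite_mem, mul_comm]
  have hc : c ≠ 0 := by rintro rfl; simp_all
  ext b
  rw [map_apply, tsum_fintype, uniformOfFinset_apply]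
  simp only [ofNatWeights_apply, ← Nat.cast_sum, htotal]
  simp only [eq_comm (a := b), ← sum_filter, div_eq_mul_inv, ← sum_mul, ← Nat.cast_sum, hfib b]
  split_ifs
  · rw [Nat.cast_mul, ← div_eq_mul_inv, ← one_div,
      ← ENNReal.mul_div_mul_left 1 _ (by simpa) (ENNReal.natCast_ne_top c), mul_one]
  · simp

lemma map_fst_ofNatWeights_eq_uniformOfFinset [Fintype β] [DecidableEq α] {w : α × β → ℕ}
    (hw : ∑ x, w x ≠ 0) {S : Finset α} (hS : S.Nonempty) {c : ℕ}
    (hrow : ∀ a, ∑ b, w (a, b) = if a ∈ S then c else 0) :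
    (ofNatWeights w hw).map Prod.fst = uniformOfFinset S hS :=
  map_ofNatWeights_eq_uniformOfFinset hw Prod.fst hS fun a => by
    rw [← hrow a, sum_filter, Fintype.sum_prod_type, sum_eq_single a (fun x _ hx => by simp [hx])
      (by simp)]
    simp

lemma map_snd_ofNatWeights_eq_uniformOfFinset [Fintype β] [DecidableEq β] {w : α × β → ℕ}
    (hw : ∑ x, w x ≠ 0) {S : Finset β} (hS : S.Nonempty) {c : ℕ}
    (hcol : ∀ b, ∑ a, w (a, b) = if b ∈ S then c else 0) :
    (ofNatWeights w hw).map Prod.snd = uniformOfFinset S hS :=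
  map_ofNatWeights_eq_uniformOfFinset hw Prod.snd hS fun b => by
    rw [← hcol b, sum_filter, Fintype.sum_prod_type_right,
      sum_eq_single b (fun x _ hx => by simp [hx]) (by simp)]
    simp

lemma ae_toMeasure_ofNatWeights [MeasurableSpace α] [MeasurableSingletonClass α] {w : α → ℕ}
    (hw : ∑ a, w a ≠ 0) {q : α → Prop} (hq : ∀ a, w a ≠ 0 → q a) :
    ∀ᵐ a ∂(ofNatWeights w hw).toMeasure, q a := by
  rw [ae_iff, toMeasure_apply_eq_zero_iff _ (Set.toFinite _).measurableSet, Set.disjoint_left]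
  intro a ha hqa
  have : w a = 0 := by_contra fun h => hqa (hq a h)
  exact ha (by simp [ofNatWeights_apply, this])

lemma integral_uniformOfFinset [MeasurableSpace α] [MeasurableSingletonClass α] {S : Finset α}
    (hS : S.Nonempty) (f : α → ℝ) :
    ∫ a, f a ∂(uniformOfFinset S hS).toMeasure = (S.card : ℝ)⁻¹ * ∑ a ∈ S, f a := by
  rw [integral_eq_sum, mul_sum, ← sum_subset (subset_univ S)
    fun a _ ha => by simp [uniformOfFinset_apply_of_notMem hS ha]]
  exact sum_congr rfl fun a ha => by simp [uniformOfFinset_apply_of_mem hS ha]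

end PMF

section Mixture

variable {ι α : Type*} [Fintype α] [DecidableEq α] (I : Finset ι) (A : ι → Finset α)
  (S : Finset α) {K : ℕ}

lemma sum_card_filter_eq_mul_card_filter
    (hmult : ∀ a, (I.filter fun i => a ∈ A i).card = if a ∈ S then K else 0)
    (p : α → Prop) [DecidablePred p] :
    ∑ i ∈ I, ((A i).filter p).card = K * (S.filter p).card := by
  calc ∑ i ∈ I, ((A i).filter p).card
      = ∑ i ∈ I, ∑ a ∈ (A i).filter p, 1 := by simp
    _ = ∑ a ∈ univ.filter p, ∑ i ∈ I.filter fun i => a ∈ A i, 1 :=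
        sum_comm' fun i a => by simp only [mem_filter, mem_univ, true_and]; tauto
    _ = ∑ a ∈ univ.filter p, if a ∈ S then K else 0 := by simp only [← card_eq_sum_ones, hmult]
    _ = K * (S.filter p).card := by
        rw [sum_ite_mem, sum_const, smul_eq_mul, mul_comm, filter_inter, univ_inter]

/-- An equal-weight mixture of uniform distributions on sets of equal size which cover every point
of `S` equally often, and nothing else, is the uniform distribution on `S`. -/
lemma inv_card_mul_sum_card_filter_div_card (hK : K ≠ 0) {Z : ℕ} (hZ : ∀ i ∈ I, (A i).card = Z)
    (hmult : ∀ a, (I.filter fun i => a ∈ A i).card = if a ∈ S then K else 0)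
    (p : α → Prop) [DecidablePred p] :
    (I.card : ℝ≥0∞)⁻¹ * ∑ i ∈ I, (((A i).filter p).card : ℝ≥0∞) / (A i).card
      = (S.filter p).card / S.card := by
  have hIZ : I.card * Z = K * S.card := by
    simpa [← sum_const_nat hZ] using
      sum_card_filter_eq_mul_card_filter I A S hmult fun _ => True
  rw [sum_congr rfl fun i hi => by rw [hZ i hi]]
  simp only [div_eq_mul_inv, ← sum_mul, ← Nat.cast_sum,
    sum_card_filter_eq_mul_card_filter I A S hmult p]
  calc (I.card : ℝ≥0∞)⁻¹ * (((K * (S.filter p).card : ℕ) : ℝ≥0∞) * (Z : ℝ≥0∞)⁻¹)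
      = (K * (S.filter p).card : ℕ) * ((I.card * Z : ℕ) : ℝ≥0∞)⁻¹ := by
        rw [Nat.cast_mul (I.card), ENNReal.mul_inv (Or.inr (ENNReal.natCast_ne_top _))
          (Or.inl (ENNReal.natCast_ne_top _))]
        ring
    _ = (S.filter p).card * (S.card : ℝ≥0∞)⁻¹ := by
        rw [hIZ, Nat.cast_mul, Nat.cast_mul, ← div_eq_mul_inv, ← div_eq_mul_inv,
          ENNReal.mul_div_mul_left _ _ (by exact_mod_cast hK) (ENNReal.natCast_ne_top _)]

end Mixture

namespace Lightbulb

section Arrays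

variable {n k : ℕ}

def rowCard (R : Fin n → Bool) : ℕ := (univ.filter fun j => R j = true).card

lemma mem_validArrays_iff {s : Fin k → ℕ} {e : Fin k → Fin n → Bool} :
    e ∈ validArrays n k s ↔ ∀ r, rowCard (e r) = s r := by
  simp [validArrays, rowCard]

lemma rowCard_update_add (R : Fin n → Bool) (j : Fin n) (b : Bool) :
    rowCard (Function.update R j b) + (R j).toNat = rowCard R + b.toNat := by
  have split (R' : Fin n → Bool) : rowCard R' = (R' j).toNat + ∑ i ∈ {j}ᶜ, (R' i).toNat := by
    rw [← Fintype.sum_eq_add_sum_compl j (fun i => (R' i).toNat), rowCard, card_filter]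
    exact sum_congr rfl fun i _ => by cases R' i <;> rfl
  rw [split, split R, Function.update_self,
    sum_congr rfl fun i hi => by rw [Function.update_of_ne (by simpa using hi)]]
  omega

lemma rowCard_not_add (R : Fin n → Bool) : rowCard (fun j => !R j) + rowCard R = n := by
  simpa [rowCard, Bool.not_eq_true] using
    card_filter_add_card_filter_not (s := univ) (fun j => R j = false)

lemma rowCard_comp_perm (R : Fin n → Bool) (σ : Equiv.Perm (Fin n)) :
    rowCard (R ∘ σ) = rowCard R := by
  simp only [rowCard, card_filter]
  exact Equiv.sum_comp σ fun j => if R j = true then 1 else 0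

lemma bulbOn_eq_decide_rowCard (e : Fin k → Fin n → Bool) (j : Fin n) :
    bulbOn e j = decide (rowCard (fun r => e r j) % 2 = 1) := rfl

lemma bulbOn_update (e : Fin k → Fin n → Bool) (ρ : Fin k) (R : Fin n → Bool) (j : Fin n) :
    bulbOn (Function.update e ρ R) j = (bulbOn e j ^^ (R j ^^ e ρ j)) := by
  have hcol : (fun r => Function.update e ρ R r j) = Function.update (fun r => e r j) ρ (R j) := by
    funext r
    by_cases hr : r = ρ
    · subst hr; simp
    · simp [hr]
  have h := rowCard_update_add (fun r => e r j) ρ (R j)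
  rw [← hcol] at h
  rw [bulbOn_eq_decide_rowCard, bulbOn_eq_decide_rowCard]
  generalize rowCard _ = c' at h ⊢
  generalize rowCard _ = c at h ⊢
  generalize R j = x at h ⊢
  generalize e ρ j = y at h ⊢
  cases x <;> cases y <;> by_cases hc : c % 2 = 1 <;> simp [hc] at h ⊢ <;> omega

lemma card_validArrays_update_compl (s : Fin k → ℕ) (ρ : Fin k) (hs : s ρ ≤ n) :
    (validArrays n k (Function.update s ρ (n - s ρ))).card = (validArrays n k s).card := by
  set c : (Fin k → Fin n → Bool) → Fin k → Fin n → Bool :=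
    fun e => Function.update e ρ fun j => !e ρ j
  have hcc (e) : c (c e) = e := by
    funext r
    by_cases hr : r = ρ
    · subst hr; simp [c]
    · simp [c, hr]
  have hrow (e) : rowCard (c e ρ) + rowCard (e ρ) = n := by
    simpa [c] using rowCard_not_add (e ρ)
  have hother (e) (r) (hr : r ≠ ρ) : c e r = e r := Function.update_of_ne hr _ _
  refine card_nbij' c c (fun e he => ?_) (fun e he => ?_) (fun e _ => hcc e) (fun e _ => hcc e) <;>
  · simp only [mem_coe, mem_validArrays_iff] at he ⊢
    intro r
    by_cases hr : r = ρ
    · subst hr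
      have := he r
      have := hrow e
      simp only [Function.update_self] at *
      omega
    · simpa [hother e r hr, hr] using he r

lemma bulbOn_comp_perm (e : Fin k → Fin n → Bool) (σ : Equiv.Perm (Fin n)) (j : Fin n) :
    bulbOn (fun r => e r ∘ σ) j = bulbOn e (σ j) := rfl

lemma numOn_comp_perm (e : Fin k → Fin n → Bool) (σ : Equiv.Perm (Fin n)) :
    numOn (fun r => e r ∘ σ) = numOn e := by
  rw [numOn, numOn, card_filter, card_filter]
  exact Equiv.sum_comp σ fun j => if bulbOn e j = true then 1 else 0

/-- Exchangeability, `E[V F(V)] = n E[X_{j₀} F(V)]`: swapping bulbs `j₀` and `j` preserves `S` and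
`numOn`, so every bulb contributes as much as `j₀`. -/
lemma sum_numOn_mul_eq (S : Finset (Fin k → Fin n → Bool))
    (hS : ∀ σ : Equiv.Perm (Fin n), ∀ e ∈ S, (fun r => e r ∘ σ) ∈ S) (j₀ : Fin n) (F : ℕ → ℝ) :
    ∑ e ∈ S, (numOn e : ℝ) * F (numOn e) = n * ∑ e ∈ S with bulbOn e j₀ = true, F (numOn e) := by
  have hswap (j : Fin n) : ∑ e ∈ S with bulbOn e j = true, F (numOn e)
      = ∑ e ∈ S with bulbOn e j₀ = true, F (numOn e) := by
    set σ := Equiv.swap j₀ j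
    have hσσ (e : Fin k → Fin n → Bool) : (fun r => (fun r => e r ∘ σ) r ∘ σ) = e := by
      funext r i; simp [σ]
    refine sum_nbij' (fun e r => e r ∘ σ) (fun e r => e r ∘ σ) ?_ ?_ (fun e _ => hσσ e)
      (fun e _ => hσσ e) (fun e _ => by rw [numOn_comp_perm])
    all_goals
      intro e he
      simp only [mem_filter] at he ⊢
      refine ⟨hS σ e he.1, ?_⟩
      simpa [bulbOn_comp_perm, σ] using he.2
  calc ∑ e ∈ S, (numOn e : ℝ) * F (numOn e)
      = ∑ j : Fin n, ∑ e ∈ S with bulbOn e j = true, F (numOn e) := by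
        simp only [numOn, card_filter, Nat.cast_sum, sum_mul, sum_filter]
        rw [sum_comm]
        simp
    _ = n * ∑ e ∈ S with bulbOn e j₀ = true, F (numOn e) := by simp [hswap]

lemma numOn_le_and_le_add_two {e e' : Fin k → Fin n → Bool} {j₀ i : Fin n}
    (h₀ : bulbOn e j₀ = false) (h₀' : bulbOn e' j₀ = true)
    (hj : ∀ j, j ≠ j₀ → j ≠ i → bulbOn e' j = bulbOn e j) :
    numOn e ≤ numOn e' ∧ numOn e' ≤ numOn e + 2 := by
  set A := univ.filter fun j => bulbOn e j = true
  set B := univ.filter fun j => bulbOn e' j = true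
  have hsub : A.erase i ⊆ B.erase j₀ := by
    intro j hj'
    simp only [A, B, mem_erase, mem_filter, mem_univ, true_and] at hj' ⊢
    have hj₀ : j ≠ j₀ := by rintro rfl; simp [h₀] at hj'
    exact ⟨hj₀, by rw [hj j hj₀ hj'.1]; exact hj'.2⟩
  have hsup : B ⊆ insert j₀ (insert i A) := by
    intro j hj'
    simp only [A, B, mem_insert, mem_filter, mem_univ, true_and] at hj' ⊢
    by_cases h1 : j = j₀
    · exact Or.inl h1
    · by_cases h2 : j = i
      · exact Or.inr (Or.inl h2)
      · exact Or.inr (Or.inr (by rw [← hj j h1 h2]; exact hj'))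
  have hB : j₀ ∈ B := by simp [B, h₀']
  have h1 := card_le_card hsub
  have h2 := card_le_card hsup
  have h2' := card_insert_le j₀ (insert i A)
  have h2'' := card_insert_le i A
  rw [card_erase_of_mem hB] at h1
  have h3 := pred_card_le_card_erase (s := A) (a := i)
  have h4 : 0 < B.card := card_pos.mpr ⟨j₀, hB⟩
  change A.card ≤ B.card ∧ B.card ≤ A.card + 2
  omega

lemma validArrays_nonempty {s : Fin k → ℕ} (hs : ∀ r, s r ≤ n) :
    (validArrays n k s).Nonempty :=
  ⟨fun r j => decide ((j : ℕ) < s r), mem_validArrays_iff.mpr fun r => by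
    simp [rowCard, Fin.card_filter_val_lt, hs r]⟩

theorem hasSizeBias_numOn {Ω : Type*} [MeasurableSpace Ω] {P : Measure Ω}
    {X Y : Ω → Fin k → Fin n → Bool} (hX : Measurable X) (hY : Measurable Y)
    {S : Finset (Fin k → Fin n → Bool)}
    (hperm : ∀ σ : Equiv.Perm (Fin n), ∀ e ∈ S, (fun r => e r ∘ σ) ∈ S) {j₀ : Fin n}
    (hS : S.Nonempty) (hT : (S.filter fun e => bulbOn e j₀ = true).Nonempty)
    (hXS : P.map X = (PMF.uniformOfFinset S hS).toMeasure)
    (hYT : P.map Y = (PMF.uniformOfFinset _ hT).toMeasure) :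
    HasSizeBias P (fun ω => (numOn (X ω) : ℝ)) (fun ω => (numOn (Y ω) : ℝ)) := by
  intro g _ _
  have hmean {Z : Ω → Fin k → Fin n → Bool} (hZ : Measurable Z) {S' : Finset _} (hS' : S'.Nonempty)
      (hZS : P.map Z = (PMF.uniformOfFinset S' hS').toMeasure) (F : (Fin k → Fin n → Bool) → ℝ) :
      ∫ ω, F (Z ω) ∂P = (S'.card : ℝ)⁻¹ * ∑ e ∈ S', F e := by
    rw [← integral_map hZ.aemeasurable Measurable.of_discrete.aestronglyMeasurable, hZS,
      PMF.integral_uniformOfFinset]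
  beta_reduce
  rw [hmean hX hS hXS fun e => (numOn e : ℝ) * g (numOn e), hmean hX hS hXS fun e => (numOn e : ℝ),
    hmean hY hT hYT fun e => g (numOn e), sum_numOn_mul_eq S hperm j₀ fun v => g v]
  have hsum : ∑ e ∈ S, (numOn e : ℝ) = n * (S.filter fun e => bulbOn e j₀ = true).card := by
    simpa using sum_numOn_mul_eq S hperm j₀ fun _ => 1
  have hTcard : ((S.filter fun e => bulbOn e j₀ = true).card : ℝ) ≠ 0 := by
    exact_mod_cast hT.card_pos.ne'
  rw [hsum]
  field_simp

end Arrays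

section FlipPair

variable {n : ℕ} [NeZero n]

/-- Toggle the switches of bulbs `0` and `i` (only of bulb `0` when `i = 0`). -/
def flipPair (i : Fin n) (R : Fin n → Bool) : Fin n → Bool :=
  Function.update (Function.update R 0 (!R 0)) i (!R i)

lemma flipPair_apply_zero (i : Fin n) (R : Fin n → Bool) : flipPair i R 0 = !R 0 := by
  by_cases hi : 0 = i
  · subst hi; simp [flipPair]
  · simp [flipPair, Function.update_of_ne hi]

lemma flipPair_apply_of_ne {i j : Fin n} (R : Fin n → Bool) (h0 : j ≠ 0) (hi : j ≠ i) :
    flipPair i R j = R j := by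
  simp [flipPair, h0, hi]

lemma flipPair_flipPair (i : Fin n) (R : Fin n → Bool) : flipPair i (flipPair i R) = R := by
  funext j
  simp only [flipPair, Function.update_apply]
  split_ifs <;> simp_all

lemma rowCard_flipPair_zero (R : Fin n → Bool) :
    rowCard (flipPair 0 R) + (R 0).toNat = rowCard R + (!R 0).toNat := by
  simpa [flipPair] using rowCard_update_add R 0 (!R 0)

lemma rowCard_flipPair_of_ne {i : Fin n} (R : Fin n → Bool) (hi : i ≠ 0) :
    rowCard (flipPair i R) + (R 0).toNat + (R i).toNat
      = rowCard R + (!R 0).toNat + (!R i).toNat := by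
  have h1 := rowCard_update_add R 0 (!R 0)
  have h2 := rowCard_update_add (Function.update R 0 (!R 0)) i (!R i)
  rw [Function.update_of_ne hi] at h2
  rw [flipPair]
  omega

end FlipPair

section Odd

variable {m : ℕ}

local notation "Arr" m => Fin (2 * m + 1) → Fin (2 * m + 1) → Bool

/-- The stages carrying `m + a` and `m + b` switches in `𝐧(a,b)`; they coincide when `m = 0`,
where `𝐧(a,b) = (b)`. -/
def specialRow (m : ℕ) : Fin 2 → Fin (2 * m + 1) := ![⟨m - 1, by omega⟩, ⟨m, by omega⟩]

lemma specialRow_zero_ne_one (hm : m ≠ 0) : specialRow m 0 ≠ specialRow m 1 := by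
  simp [specialRow, Fin.ext_iff]
  omega

lemma oddPattern_eq_ite (a b : ℕ) (r : Fin (2 * m + 1)) :
    oddPattern (2 * m + 1) m a b r = if r = specialRow m 1 then m + b
      else if r = specialRow m 0 then m + a else r + 1 := by
  simp only [oddPattern, specialRow, Fin.ext_iff, Matrix.cons_val_zero, Matrix.cons_val_one]
  split_ifs <;> omega

lemma oddPattern_specialRow (a : ℕ) (t : Fin 2) :
    oddPattern (2 * m + 1) m a a (specialRow m t) = m + a := by
  rw [oddPattern_eq_ite]
  split_ifs with h1 h0
  · rfl
  · rfl
  · fin_cases t <;> simp_all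

lemma oddPattern_of_forall_ne {r : Fin (2 * m + 1)} (hr : ∀ t, r ≠ specialRow m t) (a b : ℕ) :
    oddPattern (2 * m + 1) m a b r = r + 1 := by
  simp [oddPattern_eq_ite, hr]

def IsBalanced (R : Fin (2 * m + 1) → Bool) : Prop := rowCard R = m ∨ rowCard R = m + 1

instance : DecidablePred (IsBalanced (m := m)) := fun _ => inferInstanceAs (Decidable (_ ∨ _))

/-- Each stage may follow `𝐧(0,0)` or `𝐧(1,1)` independently of the others, so this is the union of
the four `validArrays` of the mixture. -/
def mixtureSupport (m : ℕ) : Finset (Arr m) :=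
  univ.filter fun e => ∀ r, rowCard (e r) = oddPattern (2 * m + 1) m 0 0 r ∨
    rowCard (e r) = oddPattern (2 * m + 1) m 1 1 r

variable {e : Arr m}

lemma isBalanced_specialRow (he : e ∈ mixtureSupport m) (t : Fin 2) :
    IsBalanced (e (specialRow m t)) := by
  simp only [mixtureSupport, mem_filter, mem_univ, true_and] at he
  simpa [IsBalanced, oddPattern_specialRow] using he (specialRow m t)

lemma update_mem_mixtureSupport_iff (he : e ∈ mixtureSupport m) (t : Fin 2)
    (R : Fin (2 * m + 1) → Bool) :
    Function.update e (specialRow m t) R ∈ mixtureSupport m ↔ IsBalanced R := by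
  simp only [mixtureSupport, mem_filter, mem_univ, true_and] at he ⊢
  constructor
  · intro h
    simpa [IsBalanced, oddPattern_specialRow] using h (specialRow m t)
  · intro hR r
    by_cases hr : r = specialRow m t
    · subst hr
      simpa [IsBalanced, oddPattern_specialRow] using hR
    · simpa [hr] using he r

lemma comp_perm_mem_mixtureSupport (σ : Equiv.Perm (Fin (2 * m + 1)))
    (he : e ∈ mixtureSupport m) : (fun r => e r ∘ σ) ∈ mixtureSupport m := by
  simpa [mixtureSupport, rowCard_comp_perm] using he

lemma mem_mixtureSupport_of_mem_validArrays {a b : ℕ} (ha : a ≤ 1) (hb : b ≤ 1)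
    (he : e ∈ validArrays (2 * m + 1) (2 * m + 1) (oddPattern (2 * m + 1) m a b)) :
    e ∈ mixtureSupport m := by
  simp only [mixtureSupport, mem_filter, mem_univ, true_and, mem_validArrays_iff] at he ⊢
  intro r
  rw [he r, oddPattern_eq_ite, oddPattern_eq_ite, oddPattern_eq_ite]
  split_ifs <;> omega

lemma mem_validArrays_oddPattern_iff (hm : m ≠ 0) (he : e ∈ mixtureSupport m) (a b : ℕ) :
    e ∈ validArrays (2 * m + 1) (2 * m + 1) (oddPattern (2 * m + 1) m a b) ↔
      rowCard (e (specialRow m 0)) = m + a ∧ rowCard (e (specialRow m 1)) = m + b := by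
  have h01 := specialRow_zero_ne_one hm
  simp only [mixtureSupport, mem_filter, mem_univ, true_and] at he
  rw [mem_validArrays_iff]
  constructor
  · intro h
    exact ⟨by simpa [oddPattern_eq_ite, h01] using h (specialRow m 0),
      by simpa [oddPattern_eq_ite] using h (specialRow m 1)⟩
  · rintro ⟨h0, h1⟩ r
    rw [oddPattern_eq_ite]
    split_ifs with hr1 hr0
    · rwa [hr1]
    · rwa [hr0]
    · have hr : ∀ t, r ≠ specialRow m t := fun t => by fin_cases t <;> assumption
      simpa [oddPattern_of_forall_ne hr] using he r

lemma card_filter_mem_validArrays_oddPattern (he : e ∈ mixtureSupport m) :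
    ((range 2 ×ˢ range 2).filter fun p =>
      e ∈ validArrays (2 * m + 1) (2 * m + 1) (oddPattern (2 * m + 1) m p.1 p.2)).card
      = if m = 0 then 2 else 1 := by
  rcases eq_or_ne m 0 with rfl | hm
  · -- for `m = 0` the pattern ignores `a`: a check over the four `1 × 1` arrays
    revert e
    decide
  · have h0 := isBalanced_specialRow he 0
    have h1 := isBalanced_specialRow he 1
    rw [if_neg hm, card_eq_one]
    refine ⟨(rowCard (e (specialRow m 0)) - m, rowCard (e (specialRow m 1)) - m), ?_⟩
    ext ⟨a, b⟩
    simp only [mem_filter, mem_product, mem_range, mem_validArrays_oddPattern_iff hm he,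
      mem_singleton, Prod.mk.injEq]
    unfold IsBalanced at h0 h1
    omega

lemma card_validArrays_oddPattern_right (a : ℕ) :
    (validArrays (2 * m + 1) (2 * m + 1) (oddPattern (2 * m + 1) m a 1)).card
      = (validArrays (2 * m + 1) (2 * m + 1) (oddPattern (2 * m + 1) m a 0)).card := by
  have h : oddPattern (2 * m + 1) m a 1 = Function.update (oddPattern (2 * m + 1) m a 0)
      (specialRow m 1) (2 * m + 1 - oddPattern (2 * m + 1) m a 0 (specialRow m 1)) := by
    funext r
    simp only [Function.update_apply, oddPattern_eq_ite]
    split_ifs <;> omega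
  rw [h, card_validArrays_update_compl]
  simp [oddPattern_eq_ite]
  omega

lemma card_validArrays_oddPattern_left (b : ℕ) :
    (validArrays (2 * m + 1) (2 * m + 1) (oddPattern (2 * m + 1) m 1 b)).card
      = (validArrays (2 * m + 1) (2 * m + 1) (oddPattern (2 * m + 1) m 0 b)).card := by
  rcases eq_or_ne m 0 with rfl | hm
  · have h : oddPattern (2 * 0 + 1) 0 1 b = oddPattern (2 * 0 + 1) 0 0 b := by
      funext r
      have hr : r = specialRow 0 1 := Fin.ext (by simp [specialRow])
      rw [hr, oddPattern_eq_ite, oddPattern_eq_ite, if_pos rfl, if_pos rfl]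
    rw [h]
  have h01 := specialRow_zero_ne_one hm
  have h : oddPattern (2 * m + 1) m 1 b = Function.update (oddPattern (2 * m + 1) m 0 b)
      (specialRow m 0) (2 * m + 1 - oddPattern (2 * m + 1) m 0 b (specialRow m 0)) := by
    funext r
    simp only [Function.update_apply, oddPattern_eq_ite, h01]
    split_ifs <;> simp_all
    omega
  rw [h, card_validArrays_update_compl]
  simp [oddPattern_eq_ite, h01]
  omega

lemma card_validArrays_oddPattern {a b : ℕ} (ha : a ≤ 1) (hb : b ≤ 1) :
    (validArrays (2 * m + 1) (2 * m + 1) (oddPattern (2 * m + 1) m a b)).card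
      = (validArrays (2 * m + 1) (2 * m + 1) (oddPattern (2 * m + 1) m 0 0)).card := by
  interval_cases a <;> interval_cases b <;>
    simp only [card_validArrays_oddPattern_left, card_validArrays_oddPattern_right]

/-- A balanced row stays balanced exactly when bulb `0` is flipped together with a bulb in the
opposite state, or alone if that keeps it balanced; there are always `m + 1` such choices. -/
lemma card_filter_isBalanced_flipPair {R : Fin (2 * m + 1) → Bool} (hR : IsBalanced R) :
    (univ.filter fun i => IsBalanced (flipPair i R)).card = m + 1 := by
  have hsplit : (univ.filter fun i => IsBalanced (flipPair i R))
      = (univ.filter fun i => R i ≠ R 0) ∪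
        (univ.filter fun i => i = 0 ∧ IsBalanced (flipPair 0 R)) := by
    ext i
    simp only [mem_filter, mem_univ, true_and, mem_union]
    rcases eq_or_ne i 0 with rfl | hi
    · simp
    · have := rowCard_flipPair_of_ne R hi
      unfold IsBalanced at hR ⊢
      generalize R 0 = x at this ⊢
      generalize R i = y at this ⊢
      cases x <;> cases y <;> simp [hi] at this ⊢ <;> omega
  have hdisj : Disjoint (univ.filter fun i => R i ≠ R 0)
      (univ.filter fun i => i = 0 ∧ IsBalanced (flipPair 0 R)) := by
    rw [disjoint_filter]
    rintro i - hne ⟨rfl, -⟩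
    exact hne rfl
  have h0 := rowCard_flipPair_zero R
  have hnot := rowCard_not_add R
  have hopp : (univ.filter fun i => R i ≠ R 0).card
      = if R 0 then rowCard (fun j => !R j) else rowCard R := by
    cases R 0 <;> simp [rowCard]
  rw [hsplit, card_union_of_disjoint hdisj, hopp]
  by_cases hb : IsBalanced (flipPair 0 R) <;>
    simp only [hb, and_true, and_false, filter_eq', filter_false, mem_univ, if_true,
      card_singleton, card_empty] <;>
    unfold IsBalanced at hR hb <;> cases h : R 0 <;> simp [h] at h0 ⊢ <;> omega

def move (e : Arr m) (t : Fin 2) (i : Fin (2 * m + 1)) : Arr m :=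
  Function.update e (specialRow m t) (flipPair i (e (specialRow m t)))

lemma move_move (e : Arr m) (t : Fin 2) (i : Fin (2 * m + 1)) : move (move e t i) t i = e := by
  simp [move, flipPair_flipPair]

lemma move_eq_comm {e' : Arr m} {t : Fin 2} {i : Fin (2 * m + 1)} :
    move e t i = e' ↔ move e' t i = e := by
  constructor <;> rintro rfl <;> exact move_move _ _ _

lemma bulbOn_move_zero (e : Arr m) (t : Fin 2) (i : Fin (2 * m + 1)) :
    bulbOn (move e t i) 0 = !bulbOn e 0 := by
  rw [move, bulbOn_update, flipPair_apply_zero]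
  cases bulbOn e 0 <;> cases e (specialRow m t) 0 <;> rfl

lemma bulbOn_move_of_ne (e : Arr m) (t : Fin 2) {i j : Fin (2 * m + 1)} (h0 : j ≠ 0)
    (hi : j ≠ i) : bulbOn (move e t i) j = bulbOn e j := by
  rw [move, bulbOn_update, flipPair_apply_of_ne _ h0 hi]
  simp

lemma card_filter_move_mem_mixtureSupport (he : e ∈ mixtureSupport m) :
    (univ.filter fun p : Fin 2 × Fin (2 * m + 1) => move e p.1 p.2 ∈ mixtureSupport m).card
      = 2 * (m + 1) := by
  simp only [move, update_mem_mixtureSupport_iff he, card_filter, Fintype.sum_prod_type]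
  simp only [← card_filter, card_filter_isBalanced_flipPair (isBalanced_specialRow he _)]
  simp [mul_comm]

def moveCount (e e' : Arr m) : ℕ :=
  (univ.filter fun p : Fin 2 × Fin (2 * m + 1) => move e p.1 p.2 = e').card

lemma moveCount_comm (e e' : Arr m) : moveCount e e' = moveCount e' e := by
  simp only [moveCount, move_eq_comm]

lemma sum_moveCount (e : Arr m) (A : Finset (Arr m)) :
    ∑ e' ∈ A, moveCount e e' = (univ.filter fun p : Fin 2 × Fin (2 * m + 1) =>
      move e p.1 p.2 ∈ A).card := by
  simp only [moveCount, card_filter]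
  rw [sum_comm]
  simp

/-- An array of the support with bulb `0` on stays put; one with bulb `0` off is sent along each of
its `2 (m + 1)` moves that stay in the support. -/
def couplingWeight (e e' : Arr m) : ℕ :=
  if e ∈ mixtureSupport m ∧ e' ∈ mixtureSupport m then
    if bulbOn e 0 = true then if e' = e then 2 * (m + 1) else 0 else moveCount e e'
  else 0

lemma sum_couplingWeight_left (e : Arr m) :
    ∑ e', couplingWeight e e' = if e ∈ mixtureSupport m then 2 * (m + 1) else 0 := by
  by_cases he : e ∈ mixtureSupport m
  · simp only [couplingWeight, he, true_and, if_true]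
    rw [← sum_filter]
    by_cases h0 : bulbOn e 0 = true
    · simp [h0, he]
    · simp [h0, sum_moveCount, card_filter_move_mem_mixtureSupport he]
  · simp [couplingWeight, he]

lemma sum_couplingWeight_right (e' : Arr m) :
    ∑ e, couplingWeight e e' =
      if e' ∈ (mixtureSupport m).filter fun e => bulbOn e 0 = true then 4 * (m + 1) else 0 := by
  by_cases he' : e' ∈ mixtureSupport m
  · have hoff : (univ.filter fun p : Fin 2 × Fin (2 * m + 1) =>
        move e' p.1 p.2 ∈ (mixtureSupport m).filter fun e => bulbOn e 0 = false)
        = if bulbOn e' 0 = true then univ.filter fun p : Fin 2 × Fin (2 * m + 1) =>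
          move e' p.1 p.2 ∈ mixtureSupport m else ∅ := by
      split_ifs with h0 <;> ext p <;> simp [bulbOn_move_zero, h0]
    calc ∑ e, couplingWeight e e'
        = ∑ e ∈ mixtureSupport m, if bulbOn e 0 = true then (if e' = e then 2 * (m + 1) else 0)
            else moveCount e' e := by
          simp only [couplingWeight, he', and_true, moveCount_comm _ e']
          rw [sum_ite_mem, univ_inter]
      _ = (if bulbOn e' 0 = true then 2 * (m + 1) else 0) + ∑ e ∈ (mixtureSupport m).filter
            (fun e => bulbOn e 0 = false), moveCount e' e := by
          rw [sum_ite, sum_ite_eq]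
          simp [he']
      _ = _ := by
          rw [sum_moveCount, hoff]
          split_ifs with h0 h1 h1
          · rw [card_filter_move_mem_mixtureSupport he']; ring
          · simp [he', h0] at h1
          · simp [he', h0] at h1
          · simp
  · simp [couplingWeight, he']

lemma numOn_le_and_le_add_two_of_couplingWeight_ne_zero {e' : Arr m}
    (h : couplingWeight e e' ≠ 0) :
    numOn e ≤ numOn e' ∧ numOn e' ≤ numOn e + 2 := by
  simp only [couplingWeight] at h
  split_ifs at h with hS h0 h1
  · subst h1; omega
  · exact absurd rfl h
  · obtain ⟨⟨t, i⟩, hp⟩ := card_ne_zero.mp h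
    obtain rfl : move e t i = e' := by simpa using hp
    exact numOn_le_and_le_add_two (by simpa using h0) (by simp [bulbOn_move_zero, h0])
      fun j hj hji => bulbOn_move_of_ne e t hj hji
  · exact absurd rfl h

lemma mixtureSupport_nonempty (m : ℕ) : (mixtureSupport m).Nonempty := by
  obtain ⟨e, he⟩ := validArrays_nonempty (n := 2 * m + 1)
    (s := oddPattern (2 * m + 1) m 0 0) fun r => by rw [oddPattern_eq_ite]; split_ifs <;> omega
  exact ⟨e, mem_mixtureSupport_of_mem_validArrays zero_le_one zero_le_one he⟩

lemma sum_couplingWeight (m : ℕ) :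
    ∑ x : (Arr m) × (Arr m), couplingWeight x.1 x.2 = 2 * (m + 1) * (mixtureSupport m).card := by
  simp [Fintype.sum_prod_type, sum_couplingWeight_left, mul_comm]

/-- Double counting of the coupling weights by rows and by columns. -/
lemma card_mixtureSupport_eq_two_mul (m : ℕ) :
    (mixtureSupport m).card = 2 * ((mixtureSupport m).filter fun e => bulbOn e 0 = true).card := by
  have h := sum_couplingWeight m
  rw [Fintype.sum_prod_type_right] at h
  simp only [sum_couplingWeight_right, sum_ite_mem, univ_inter, sum_const, smul_eq_mul] at h
  nlinarith

lemma mixture_eq_uniform (p : (Arr m) → Prop) [DecidablePred p] :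
    (1 / 4 : ℝ≥0∞) * ∑ a ∈ range 2, ∑ b ∈ range 2,
      (((validArrays (2 * m + 1) (2 * m + 1) (oddPattern (2 * m + 1) m a b)).filter p).card
        : ℝ≥0∞) / (validArrays (2 * m + 1) (2 * m + 1) (oddPattern (2 * m + 1) m a b)).card
      = ((mixtureSupport m).filter p).card / (mixtureSupport m).card := by
  rw [← sum_product' (f := fun a b => (((validArrays (2 * m + 1) (2 * m + 1)
    (oddPattern (2 * m + 1) m a b)).filter p).card : ℝ≥0∞) /
      (validArrays (2 * m + 1) (2 * m + 1) (oddPattern (2 * m + 1) m a b)).card),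
    show (1 / 4 : ℝ≥0∞) = ((range 2 ×ˢ range 2).card : ℝ≥0∞)⁻¹ by norm_num]
  refine inv_card_mul_sum_card_filter_div_card (range 2 ×ˢ range 2)
    (fun x => validArrays (2 * m + 1) (2 * m + 1) (oddPattern (2 * m + 1) m x.1 x.2))
    (mixtureSupport m) (K := if m = 0 then 2 else 1) (by split_ifs <;> simp)
    (Z := (validArrays (2 * m + 1) (2 * m + 1) (oddPattern (2 * m + 1) m 0 0)).card)
    (fun x hx => ?_) (fun e => ?_) p
  · simp only [mem_product, mem_range] at hx
    exact card_validArrays_oddPattern (by omega) (by omega)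
  · by_cases he : e ∈ mixtureSupport m
    · rw [if_pos he]
      exact card_filter_mem_validArrays_oddPattern he
    · rw [if_neg he, card_eq_zero, filter_eq_empty_iff]
      intro x hx hmem
      simp only [mem_product, mem_range] at hx
      exact he (mem_mixtureSupport_of_mem_validArrays (by omega) (by omega) hmem)

lemma mixtureSupport_filter_bulbOn_nonempty (m : ℕ) :
    ((mixtureSupport m).filter fun e => bulbOn e 0 = true).Nonempty := by
  have := card_mixtureSupport_eq_two_mul m
  have := (mixtureSupport_nonempty m).card_pos
  rw [← card_pos]
  omega

lemma sum_couplingWeight_ne_zero (m : ℕ) : ∑ x : (Arr m) × (Arr m), couplingWeight x.1 x.2 ≠ 0 := by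
  rw [sum_couplingWeight]
  exact mul_ne_zero (by omega) (mixtureSupport_nonempty m).card_pos.ne'

noncomputable def couplingPMF (m : ℕ) : PMF ((Arr m) × (Arr m)) :=
  PMF.ofNatWeights (fun x => couplingWeight x.1 x.2) (sum_couplingWeight_ne_zero m)

lemma map_fst_toMeasure_couplingPMF (m : ℕ) :
    (couplingPMF m).toMeasure.map Prod.fst
      = (PMF.uniformOfFinset _ (mixtureSupport_nonempty m)).toMeasure := by
  rw [couplingPMF, PMF.toMeasure_map _ _ measurable_fst,
    PMF.map_fst_ofNatWeights_eq_uniformOfFinset _ _ sum_couplingWeight_left]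

lemma map_snd_toMeasure_couplingPMF (m : ℕ) :
    (couplingPMF m).toMeasure.map Prod.snd
      = (PMF.uniformOfFinset _ (mixtureSupport_filter_bulbOn_nonempty m)).toMeasure := by
  rw [couplingPMF, PMF.toMeasure_map _ _ measurable_snd,
    PMF.map_snd_ofNatWeights_eq_uniformOfFinset _ _ sum_couplingWeight_right]

lemma ae_numOn_le_and_le_add_two_couplingPMF (m : ℕ) :
    ∀ᵐ ω ∂(couplingPMF m).toMeasure, numOn ω.1 ≤ numOn ω.2 ∧ numOn ω.2 ≤ numOn ω.1 + 2 :=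
  PMF.ae_toMeasure_ofNatWeights _ fun _ => numOn_le_and_le_add_two_of_couplingWeight_ne_zero

lemma toMeasure_couplingPMF_numOn_fst_eq (v : ℕ) :
    (couplingPMF m).toMeasure {ω | numOn ω.1 = v}
      = (1 / 4 : ℝ≥0∞) * ∑ a ∈ range 2, ∑ b ∈ range 2,
        (((validArrays (2 * m + 1) (2 * m + 1) (oddPattern (2 * m + 1) m a b)).filter
          fun e => numOn e = v).card : ℝ≥0∞)
            / (validArrays (2 * m + 1) (2 * m + 1) (oddPattern (2 * m + 1) m a b)).card := by
  have h := PMF.toMeasure_uniformOfFinset_apply (mixtureSupport_nonempty m) {e | numOn e = v}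
    .of_discrete
  rw [← map_fst_toMeasure_couplingPMF, Measure.map_apply measurable_fst .of_discrete] at h
  rw [mixture_eq_uniform]
  convert h using 4 <;> ext e <;> simp

end Odd

end Lightbulb

open Lightbulb in
/-- Bounded monotone size bias coupling for the symmetrized odd lightbulb variable `V`:
there is a coupling of a copy `V'` of `V` with a variable `Vs` having the `V'`-size bias
distribution such that `Vs - V' ∈ {0, 1, 2}` almost surely. -/
theorem lightbulb_size_bias_coupling_odd {n m : ℕ} (hm : n = 2 * m + 1) :
    ∃ (Ω : Type) (_ : MeasurableSpace Ω) (P : Measure Ω) (_ : IsProbabilityMeasure P)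
      (V' Vs : Ω → ℕ),
      Measurable V' ∧ Measurable Vs ∧
      (∀ v : ℕ, P {ω | V' ω = v}
        = (1 / 4 : ENNReal) * ∑ a ∈ Finset.range 2, ∑ b ∈ Finset.range 2,
            (((validArrays n n (oddPattern n m a b)).filter
                (fun e => numOn e = v)).card : ENNReal)
              / ((validArrays n n (oddPattern n m a b)).card : ENNReal)) ∧
      HasSizeBias P (fun ω => (V' ω : ℝ)) (fun ω => (Vs ω : ℝ)) ∧
      (∀ᵐ ω ∂P, Vs ω = V' ω ∨ Vs ω = V' ω + 1 ∨ Vs ω = V' ω + 2) ∧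
      (∀ᵐ ω ∂P, V' ω ≤ Vs ω ∧ Vs ω ≤ V' ω + 2) := by
  subst hm
  have hbounds := ae_numOn_le_and_le_add_two_couplingPMF m
  refine ⟨_, inferInstance, (couplingPMF m).toMeasure, inferInstance, fun ω => numOn ω.1,
    fun ω => numOn ω.2, .of_discrete, .of_discrete, toMeasure_couplingPMF_numOn_fst_eq, ?_,
    hbounds.mono fun ω h => by dsimp only; omega, hbounds⟩
  exact hasSizeBias_numOn measurable_fst measurable_snd
    (fun σ _ => comp_perm_mem_mixtureSupport σ) _ _ (map_fst_toMeasure_couplingPMF m)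
    (map_snd_toMeasure_couplingPMF m)
end

section
/- For all integers n ≥ 0 and all b, s ∈ {0,…,n}, the matrix Γ_{n,b,s} defined by the recursion Γ_{n,0,s} = (1) and Γ_{n,b,s} = (s/n)(Γ ⊗ Γ_{n−1,b−1,s−1}) + (1 − s/n)(I₂ ⊗ Γ_{n−1,b−1,s}) satisfies Γ_{n,b,s} = diag(λ_{n,a_1,s}, λ_{n,a_2,s}, …, λ_{n,a_{2^b},s}). -/
open Finset Matrix

/-- `λ_{n,b,s} = ∑_{t=0}^{b} C(b,t) (−2)^t (s)_t/(n)_t`. -/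
noncomputable def lam (n b s : ℕ) : ℝ :=
  ∑ t ∈ Finset.range (b + 1),
    (b.choose t : ℝ) * (-2 : ℝ) ^ t * (s.descFactorial t : ℝ) / (n.descFactorial t : ℝ)

/-- The entries of the vector `𝐚_b`, defined by `𝐚_1 = (0,1)` and
`𝐚_b = (𝐚_{b−1}, 𝐚_{b−1} + 𝟏)`; `avec b i` is the `(i+1)`-st entry of `𝐚_b`. -/
def avec : (b : ℕ) → Fin (2 ^ b) → ℕ
  | 0, _ => 0
  | b + 1, i =>
    if h : (i : ℕ) < 2 ^ b then avec b ⟨i, h⟩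
    else avec b ⟨(i : ℕ) - 2 ^ b, by
        have h2 : (i : ℕ) < 2 ^ b * 2 := by rw [← pow_succ]; exact i.isLt
        omega⟩ + 1

/-- Kronecker product of a `2 × 2` matrix with a `k × k` matrix, with indices flattened. -/
noncomputable def kron2 {k : ℕ} (A : Matrix (Fin 2) (Fin 2) ℝ) (B : Matrix (Fin k) (Fin k) ℝ) :
    Matrix (Fin (2 * k)) (Fin (2 * k)) ℝ :=
  Matrix.of fun i j =>
    A ⟨(i : ℕ) / k, by
        rcases Nat.eq_zero_or_pos k with h | h
        · exact absurd i.isLt (by omega)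
        · exact (Nat.div_lt_iff_lt_mul h).mpr (by have := i.isLt; omega)⟩
      ⟨(j : ℕ) / k, by
        rcases Nat.eq_zero_or_pos k with h | h
        · exact absurd j.isLt (by omega)
        · exact (Nat.div_lt_iff_lt_mul h).mpr (by have := j.isLt; omega)⟩
    * B ⟨(i : ℕ) % k, by
        rcases Nat.eq_zero_or_pos k with h | h
        · exact absurd i.isLt (by omega)
        · exact Nat.mod_lt _ h⟩
      ⟨(j : ℕ) % k, by
        rcases Nat.eq_zero_or_pos k with h | h
        · exact absurd j.isLt (by omega)
        · exact Nat.mod_lt _ h⟩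

theorem two_mul_pow (b : ℕ) : 2 * 2 ^ b = 2 ^ (b + 1) := by rw [pow_succ]; ring

/-- `Γ = diag(1, −1)`. -/
noncomputable def gammaM : Matrix (Fin 2) (Fin 2) ℝ := !![1, 0; 0, -1]

/-- The matrices `Γ_{n,b,s}`, defined by the recursion
`Γ_{n,0,s} = (1)` and
`Γ_{n,b,s} = (s/n)(Γ ⊗ Γ_{n−1,b−1,s−1}) + (1 − s/n)(I₂ ⊗ Γ_{n−1,b−1,s})`. -/
noncomputable def Gam : (b : ℕ) → ℕ → ℕ → Matrix (Fin (2 ^ b)) (Fin (2 ^ b)) ℝ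
  | 0, _, _ => 1
  | b + 1, n, s =>
    Matrix.reindex (finCongr (two_mul_pow b)) (finCongr (two_mul_pow b))
      (((s : ℝ) / (n : ℝ)) • kron2 gammaM (Gam b (n - 1) (s - 1))
        + (1 - (s : ℝ) / (n : ℝ)) • kron2 (1 : Matrix (Fin 2) (Fin 2) ℝ) (Gam b (n - 1) s))


lemma keyNat (n s t : ℕ) (hs : s ≤ n) (ht : t ≤ n) :
    (s+1) * s.descFactorial t + (n - s) * (s+1).descFactorial t
      = (n + 1 - t) * (s+1).descFactorial t := by
  rw [← Nat.succ_descFactorial_succ, Nat.descFactorial_succ]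
  rcases Nat.lt_or_ge (s+1) t with h | h
  · simp [Nat.descFactorial_eq_zero_iff_lt.mpr h]
  · rw [← Nat.add_mul]
    congr 1
    omega

lemma D_rec (n s t : ℕ) (hs : s ≤ n + 1) (ht : t ≤ n) :
    (s:ℝ)/(n+1) * ((s-1).descFactorial t / n.descFactorial t)
      + (1 - (s:ℝ)/(n+1)) * (s.descFactorial t / n.descFactorial t)
    = s.descFactorial t / (n+1).descFactorial t := by
  have hnd : ((n.descFactorial t : ℕ) : ℝ) ≠ 0 := by
    rw [Nat.cast_ne_zero]
    intro h; exact absurd (Nat.descFactorial_eq_zero_iff_lt.mp h) (by omega)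
  have hnd1 : (((n+1).descFactorial t : ℕ) : ℝ) ≠ 0 := by
    rw [Nat.cast_ne_zero]
    intro h; exact absurd (Nat.descFactorial_eq_zero_iff_lt.mp h) (by omega)
  have hn1 : ((n:ℝ)+1) ≠ 0 := by positivity
  rcases Nat.eq_zero_or_eq_succ_pred s with rfl | hss
  · rcases Nat.eq_zero_or_eq_succ_pred t with rfl | htt
    · simp
    · rw [htt]
      simp [Nat.zero_descFactorial_succ]
  · obtain ⟨s', rfl⟩ : ∃ s', s = s' + 1 := ⟨s - 1, by omega⟩
    have key := keyNat n s' t (by omega) ht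
    have hD : ((n+1-t : ℕ) : ℝ) * ((n+1).descFactorial t : ℕ) = ((n:ℝ)+1) * (n.descFactorial t : ℕ) := by
      have : (n+1-t) * (n+1).descFactorial t = (n+1) * n.descFactorial t := by
        rw [← Nat.descFactorial_succ, Nat.succ_descFactorial_succ]
      exact_mod_cast congrArg (Nat.cast : ℕ → ℝ) this
    have key' : ((s':ℝ)+1) * (s'.descFactorial t : ℕ) + ((n:ℝ) - s') * ((s'+1).descFactorial t : ℕ)
        = ((n+1-t : ℕ):ℝ) * ((s'+1).descFactorial t : ℕ) := by
      have := congrArg (Nat.cast : ℕ → ℝ) key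
      push_cast [Nat.cast_sub (show s' ≤ n by omega)] at this ⊢
      linarith [this]
    have hsimp : ((s'+1 : ℕ)) - 1 = s' := by omega
    rw [hsimp]
    field_simp
    push_cast at key' ⊢
    nlinarith [key', hD]

lemma D_shift (n s t : ℕ) (ht : t ≤ n) :
    (s:ℝ)/(n+1) * ((s-1).descFactorial t / n.descFactorial t)
      = (s.descFactorial (t+1) : ℝ) / ((n+1).descFactorial (t+1) : ℝ) := by
  rcases Nat.eq_zero_or_eq_succ_pred s with rfl | hss
  · simp [Nat.zero_descFactorial_succ]
  · obtain ⟨s', rfl⟩ : ∃ s', s = s' + 1 := ⟨s - 1, by omega⟩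
    have hnd : ((n.descFactorial t : ℕ) : ℝ) ≠ 0 := by
      rw [Nat.cast_ne_zero]
      intro h; exact absurd (Nat.descFactorial_eq_zero_iff_lt.mp h) (by omega)
    have hn1 : ((n:ℝ)+1) ≠ 0 := by positivity
    rw [Nat.succ_descFactorial_succ, Nat.succ_descFactorial_succ]
    have hsimp : ((s'+1 : ℕ)) - 1 = s' := by omega
    rw [hsimp]
    push_cast
    field_simp
    try ring

lemma lam_rec (n s a : ℕ) (hs : s ≤ n + 1) (ha : a ≤ n) :
    (s:ℝ)/(n+1) * lam n a (s-1) + (1 - (s:ℝ)/(n+1)) * lam n a s = lam (n+1) a s := by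
  unfold lam
  rw [Finset.mul_sum, Finset.mul_sum, ← Finset.sum_add_distrib]
  refine Finset.sum_congr rfl fun t htm => ?_
  have ht : t ≤ n := by have := Finset.mem_range.mp htm; omega
  have h := D_rec n s t hs ht
  push_cast at h ⊢
  linear_combination ((a.choose t : ℝ) * (-2:ℝ)^t) * h

lemma lam_succ_b (n s a : ℕ) (ha : a ≤ n) :
    lam (n+1) (a+1) s = lam (n+1) a s - 2 * ((s:ℝ)/(n+1)) * lam n a (s-1) := by
  have h0 : lam (n+1) (a+1) s = (∑ u ∈ Finset.range (a+1),
      (((a+1).choose (u+1) : ℕ) : ℝ) * (-2:ℝ)^(u+1) * (s.descFactorial (u+1) : ℝ)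
        / (((n+1).descFactorial (u+1) : ℕ) : ℝ)) + 1 := by
    unfold lam
    rw [Finset.sum_range_succ' _ (a+1)]
    norm_num
  have h1 : lam (n+1) a s = (∑ u ∈ Finset.range (a+1),
      ((a.choose (u+1) : ℕ) : ℝ) * (-2:ℝ)^(u+1) * (s.descFactorial (u+1) : ℝ)
        / (((n+1).descFactorial (u+1) : ℕ) : ℝ)) + 1 := by
    unfold lam
    have hext : ∑ t ∈ Finset.range (a+1+1),
        (a.choose t : ℝ) * (-2:ℝ)^t * (s.descFactorial t : ℝ) / (((n+1).descFactorial t : ℕ) : ℝ)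
        = ∑ t ∈ Finset.range (a+1),
        (a.choose t : ℝ) * (-2:ℝ)^t * (s.descFactorial t : ℝ) / (((n+1).descFactorial t : ℕ) : ℝ) := by
      rw [Finset.sum_range_succ, Nat.choose_succ_self]
      norm_num
    rw [← hext, Finset.sum_range_succ' _ (a+1)]
    norm_num
  have h2 : ((s:ℝ)/(n+1)) * lam n a (s-1) = ∑ u ∈ Finset.range (a+1),
      (a.choose u : ℝ) * (-2:ℝ)^u * (s.descFactorial (u+1) : ℝ)
        / (((n+1).descFactorial (u+1) : ℕ) : ℝ) := by
    unfold lam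
    rw [Finset.mul_sum]
    refine Finset.sum_congr rfl fun u hu => ?_
    have hu' : u ≤ n := by have := Finset.mem_range.mp hu; omega
    have h := D_shift n s u hu'
    linear_combination ((a.choose u : ℝ) * (-2:ℝ)^u) * h
  rw [h0, h1, mul_assoc, h2, Finset.mul_sum]
  have key : ∀ u ∈ Finset.range (a+1),
      (((a+1).choose (u+1) : ℕ) : ℝ) * (-2:ℝ)^(u+1) * (s.descFactorial (u+1) : ℝ)
        / (((n+1).descFactorial (u+1) : ℕ) : ℝ)
      = ((a.choose (u+1) : ℕ) : ℝ) * (-2:ℝ)^(u+1) * (s.descFactorial (u+1) : ℝ)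
        / (((n+1).descFactorial (u+1) : ℕ) : ℝ)
        - 2 * ((a.choose u : ℝ) * (-2:ℝ)^u * (s.descFactorial (u+1) : ℝ)
        / (((n+1).descFactorial (u+1) : ℕ) : ℝ)) := by
    intro u hu
    rw [Nat.choose_succ_succ]
    push_cast
    ring
  rw [Finset.sum_congr rfl key, Finset.sum_sub_distrib]
  ring

lemma lam_rec_neg (n s a : ℕ) (hs : s ≤ n + 1) (ha : a ≤ n) :
    (s:ℝ)/(n+1) * (-1) * lam n a (s-1) + (1 - (s:ℝ)/(n+1)) * lam n a s
      = lam (n+1) (a+1) s := by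
  rw [lam_succ_b n s a ha, ← lam_rec n s a hs ha]
  ring

lemma avec_le : ∀ (b : ℕ) (i : Fin (2^b)), avec b i ≤ b := by
  intro b
  induction b with
  | zero => intro i; simp [avec]
  | succ b ih =>
    intro i
    by_cases h : (i : ℕ) < 2^b
    · simp only [avec, dif_pos h]
      exact (ih _).trans (by omega)
    · simp only [avec, dif_neg h]
      exact Nat.succ_le_succ (ih _)

lemma gammaM_apply_ne (p q : Fin 2) (h : p ≠ q) : gammaM p q = 0 := by
  fin_cases p <;> fin_cases q <;> simp_all [gammaM]

/-- `Γ_{n,b,s} = diag(λ_{n,a_1,s}, …, λ_{n,a_{2^b},s})`. -/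
theorem Gam_eq_diagonal (n b s : ℕ) (hb : b ≤ n) (hs : s ≤ n) :
    Gam b n s = Matrix.diagonal (fun i => lam n (avec b i) s) := by
  induction b generalizing n s with
  | zero =>
    have h1 : (fun i : Fin (2^0) => lam n (avec 0 i) s) = fun _ => (1:ℝ) :=
      funext fun i => by simp [avec, lam]
    rw [h1, Matrix.diagonal_one]
    rfl
  | succ b ih =>
    obtain ⟨m, rfl⟩ : ∃ m, n = m + 1 := ⟨n - 1, by omega⟩
    have hb' : b ≤ m := by omega
    have IH1 : Gam b m (s-1) = Matrix.diagonal (fun i => lam m (avec b i) (s-1)) :=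
      ih m (s-1) hb' (by omega)
    have hs' : s ≤ m + 1 := hs
    have hc0 : ¬ s ≤ m → (1 : ℝ) - (s:ℝ)/((m:ℝ)+1) = 0 := by
      intro h
      have : s = m + 1 := by omega
      subst this
      push_cast
      rw [div_self (by positivity), sub_self]
    have E2d : ∀ p : Fin (2^b),
        (1 - (s:ℝ)/((m:ℝ)+1)) * Gam b m s p p
          = (1 - (s:ℝ)/((m:ℝ)+1)) * lam m (avec b p) s := by
      intro p
      by_cases h : s ≤ m
      · rw [ih m s hb' h, Matrix.diagonal_apply_eq]
      · rw [hc0 h, zero_mul, zero_mul]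
    have E2o : ∀ p q : Fin (2^b), p ≠ q →
        (1 - (s:ℝ)/((m:ℝ)+1)) * Gam b m s p q = 0 := by
      intro p q hpq
      by_cases h : s ≤ m
      · rw [ih m s hb' h, Matrix.diagonal_apply_ne _ hpq, mul_zero]
      · rw [hc0 h, zero_mul]
    ext i j
    simp only [Gam, Matrix.reindex_apply, Matrix.submatrix_apply, finCongr_symm_apply,
      Matrix.add_apply, Matrix.smul_apply, kron2, Matrix.of_apply, Fin.coe_cast, smul_eq_mul,
      Nat.add_sub_cancel]
    push_cast
    have hik : (i : ℕ) < 2 ^ b * 2 := lt_of_lt_of_eq i.isLt (pow_succ 2 b)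
    have hjk : (j : ℕ) < 2 ^ b * 2 := lt_of_lt_of_eq j.isLt (pow_succ 2 b)
    by_cases hij : i = j
    · subst hij
      rw [Matrix.diagonal_apply_eq]
      rw [Matrix.one_apply_eq]
      by_cases hi : (i : ℕ) < 2 ^ b
      · have hdiv : (i : ℕ) / 2 ^ b = 0 := Nat.div_eq_of_lt hi
        have hmod : (i : ℕ) % 2 ^ b = (i : ℕ) := Nat.mod_eq_of_lt hi
        simp only [hdiv, hmod]
        have havec : avec (b+1) i = avec b ⟨(i : ℕ), hi⟩ := by
          simp only [avec, dif_pos hi]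
        rw [havec, IH1, Matrix.diagonal_apply_eq]
        have hg : gammaM ⟨0, by norm_num⟩ ⟨0, by norm_num⟩ = 1 := by simp [gammaM]
        rw [hg]
        have := E2d ⟨(i : ℕ), hi⟩
        have hlr := lam_rec m s (avec b ⟨(i : ℕ), hi⟩) hs' ((avec_le b _).trans hb')
        linear_combination this + hlr
      · have hdiv : (i : ℕ) / 2 ^ b = 1 :=
          Nat.div_eq_of_lt_le (by omega) (by omega)
        have hmod : (i : ℕ) % 2 ^ b = (i : ℕ) - 2 ^ b := by
          rw [Nat.mod_eq_sub_mod (le_of_not_gt hi), Nat.mod_eq_of_lt (by omega)]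
        simp only [hdiv, hmod]
        have havec : avec (b+1) i = avec b ⟨(i : ℕ) - 2 ^ b, by omega⟩ + 1 := by
          simp only [avec, dif_neg hi]
        rw [havec, IH1, Matrix.diagonal_apply_eq]
        have hg : gammaM ⟨1, by norm_num⟩ ⟨1, by norm_num⟩ = -1 := by simp [gammaM]
        rw [hg]
        have := E2d ⟨(i : ℕ) - 2 ^ b, by omega⟩
        have hlr := lam_rec_neg m s (avec b ⟨(i : ℕ) - 2 ^ b, by omega⟩) hs'
          ((avec_le b _).trans hb')
        linear_combination this + hlr
    · have hvij : (i : ℕ) ≠ (j : ℕ) := fun h => hij (Fin.ext h)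
      rw [Matrix.diagonal_apply_ne _ hij]
      by_cases hq : (i : ℕ) / 2 ^ b = (j : ℕ) / 2 ^ b
      · have hm : (i : ℕ) % 2 ^ b ≠ (j : ℕ) % 2 ^ b := by
          have h1 := Nat.div_add_mod (i : ℕ) (2 ^ b)
          have h2 := Nat.div_add_mod (j : ℕ) (2 ^ b)
          rw [← hq] at h2
          intro h
          exact hvij (by omega)
        have hpq : (⟨(i : ℕ) % 2 ^ b, Nat.mod_lt _ (by positivity)⟩ : Fin (2^b))
            ≠ ⟨(j : ℕ) % 2 ^ b, Nat.mod_lt _ (by positivity)⟩ :=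
          fun h => hm (congrArg Fin.val h)
        rw [IH1, Matrix.diagonal_apply_ne _ hpq]
        rw [mul_left_comm (1 - (s:ℝ)/((m:ℝ)+1)), E2o _ _ hpq]
        ring
      · have hpq2 : (⟨(i : ℕ) / 2 ^ b,
              (Nat.div_lt_iff_lt_mul (pow_pos (by norm_num) b)).mpr (by omega)⟩ : Fin 2)
            ≠ ⟨(j : ℕ) / 2 ^ b,
              (Nat.div_lt_iff_lt_mul (pow_pos (by norm_num) b)).mpr (by omega)⟩ :=
          fun h => hq (congrArg Fin.val h)
        rw [gammaM_apply_ne _ _ hpq2]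
        rw [Matrix.one_apply]
        split_ifs with h
        · exact absurd (congrArg Fin.val h) hq
        · ring
end

section
/- Let b ≥ 1, let v ∈ ℝ^{2^{b−1}}, and let a : {0,…,b−1} → ℝ (with the convention a(−1) = 0) be such that for every real sequence x = (x_0, x_1, …), vᵀ·Ω_{b−1,0}(x)·u_{b−1} = 2^{−(b−1)}·Σ_{j=0}^{b−1} C(b−1,j)·a(j)·x_j. Then for every real sequence x: (u_1 ⊗ v)ᵀ·Ω_{b,0}(x)·u_b = 2^{−b}·Σ_{j=0}^{b} C(b,j)·a_u(j)·x_j with a_u(j) = ((b−j)/b)·a(j) + (j/b)·a(j−1), and (w_1 ⊗ v)ᵀ·Ω_{b,0}(x)·u_b = 2^{−b}·Σ_{j=0}^{b} C(b,j)·a_w(j)·x_j with a_w(j) = ((b−j)/b)·a(j) − (j/b)·a(j−1). -/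
/-!
On the two halves of the index set of `𝐚_{b+1}` the entries are those of `𝐚_b` and `𝐚_b + 𝟏`,
so the form for `u_1 ⊗ v` (resp. `w_1 ⊗ v`) is half the form for `v` at `x` plus (resp. minus)
half the form for `v` at the shifted sequence `(x_{j+1})`. The hypothesis evaluates both, and the
binomial identities `C(b+1,j)·(b+1−j)/(b+1) = C(b,j)` and `C(b+1,j+1)·(j+1)/(b+1) = C(b,j)`
recombine the two sums into one.
-/

open Finset Matrix

/-- Kronecker product of the vector `(c₀, c₁)ᵀ` with a vector of length `2^b`. -/
noncomputable def kron1 {b : ℕ} (c0 c1 : ℝ) (v : Fin (2 ^ b) → ℝ) : Fin (2 ^ (b + 1)) → ℝ :=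
  fun i =>
    if h : (i : ℕ) < 2 ^ b then c0 * v ⟨i, h⟩
    else c1 * v ⟨(i : ℕ) - 2 ^ b, by
        have h2 : (i : ℕ) < 2 ^ b * 2 := by rw [← pow_succ]; exact i.isLt
        omega⟩

/-- The `b`-fold Kronecker power `u_b = u_1^{⊗b}` of `u_1 = (1,−1)ᵀ/√2`. -/
noncomputable def uvec : (b : ℕ) → Fin (2 ^ b) → ℝ
  | 0, _ => 1
  | b + 1, i => kron1 (Real.sqrt 2)⁻¹ (-(Real.sqrt 2)⁻¹) (uvec b) i


section Halves

variable {b : ℕ}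

theorem sum_two_pow_succ {M : Type*} [AddCommMonoid M] (f : Fin (2 ^ (b + 1)) → M) :
    ∑ i, f i = ∑ i : Fin (2 ^ b), f (Fin.cast (Nat.two_pow_succ b).symm (Fin.castAdd _ i))
      + ∑ i : Fin (2 ^ b), f (Fin.cast (Nat.two_pow_succ b).symm (Fin.natAdd _ i)) := by
  rw [← Fintype.sum_equiv (finCongr (Nat.two_pow_succ b).symm) _ f fun _ => rfl,
    Fin.sum_univ_add]
  rfl

theorem kron1_cast_castAdd (c0 c1 : ℝ) (v : Fin (2 ^ b) → ℝ) (i : Fin (2 ^ b)) :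
    kron1 c0 c1 v (Fin.cast (Nat.two_pow_succ b).symm (Fin.castAdd _ i)) = c0 * v i := by
  simp [kron1]

theorem kron1_cast_natAdd (c0 c1 : ℝ) (v : Fin (2 ^ b) → ℝ) (i : Fin (2 ^ b)) :
    kron1 c0 c1 v (Fin.cast (Nat.two_pow_succ b).symm (Fin.natAdd _ i)) = c1 * v i := by
  simp [kron1]

theorem avec_succ_cast_castAdd (i : Fin (2 ^ b)) :
    avec (b + 1) (Fin.cast (Nat.two_pow_succ b).symm (Fin.castAdd _ i)) = avec b i := by
  simp [avec]

theorem avec_succ_cast_natAdd (i : Fin (2 ^ b)) :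
    avec (b + 1) (Fin.cast (Nat.two_pow_succ b).symm (Fin.natAdd _ i)) = avec b i + 1 := by
  simp [avec]

end Halves

theorem uvec_succ (b : ℕ) : uvec (b + 1) = kron1 (√2)⁻¹ (-(√2)⁻¹) (uvec b) := rfl

theorem kron1_dotProduct_diagonal_avec_mulVec_kron1 {b : ℕ} (c0 c1 e0 e1 : ℝ)
    (v u : Fin (2 ^ b) → ℝ) (d : ℕ → ℝ) :
    kron1 c0 c1 v ⬝ᵥ diagonal (fun i => d (avec (b + 1) i)) *ᵥ kron1 e0 e1 u
      = c0 * e0 * (v ⬝ᵥ diagonal (fun i => d (avec b i)) *ᵥ u)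
        + c1 * e1 * (v ⬝ᵥ diagonal (fun i => d (avec b i + 1)) *ᵥ u) := by
  simp only [dotProduct, mulVec_diagonal, mul_sum]
  rw [sum_two_pow_succ]
  congr 1 <;> refine sum_congr rfl fun i _ => ?_ <;>
    simp only [kron1_cast_castAdd, kron1_cast_natAdd, avec_succ_cast_castAdd,
      avec_succ_cast_natAdd] <;>
    ring

theorem choose_succ_mul_sub_div (b j : ℕ) :
    ((b + 1).choose j : ℝ) * (((b : ℝ) + 1 - j) / ((b : ℝ) + 1)) = b.choose j := by
  rcases le_or_gt j (b + 1) with hj | hj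
  · have h := congrArg (Nat.cast : ℕ → ℝ) (Nat.choose_mul_succ_eq b j)
    push_cast [Nat.cast_sub hj] at h
    rw [mul_div_assoc', div_eq_iff (by positivity)]
    linear_combination -h
  · simp [Nat.choose_eq_zero_of_lt hj, Nat.choose_eq_zero_of_lt (by omega : b < j)]

theorem choose_succ_succ_mul_div (b j : ℕ) :
    ((b + 1).choose (j + 1) : ℝ) * (((j : ℝ) + 1) / ((b : ℝ) + 1)) = b.choose j := by
  rw [mul_div_assoc', div_eq_iff (by positivity)]
  exact_mod_cast (Nat.add_one_mul_choose_eq b j).symm.trans (mul_comm _ _)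

theorem sum_range_choose_succ_mul (b : ℕ) (a x : ℕ → ℝ) (ε : ℝ) :
    ∑ j ∈ range (b + 2), ((b + 1).choose j : ℝ)
        * ((((b : ℝ) + 1 - j) / ((b : ℝ) + 1)) * a j + ε * (((j : ℝ) / ((b : ℝ) + 1)) * a (j - 1)))
        * x j
      = ∑ j ∈ range (b + 1), (b.choose j : ℝ) * a j * x j
        + ε * ∑ j ∈ range (b + 1), (b.choose j : ℝ) * a j * x (j + 1) := by
  have hkeep : ∑ j ∈ range (b + 2), ((b + 1).choose j : ℝ) * (((b : ℝ) + 1 - j) / ((b : ℝ) + 1))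
      * a j * x j = ∑ j ∈ range (b + 1), (b.choose j : ℝ) * a j * x j := by
    simp [sum_range_succ _ (b + 1), choose_succ_mul_sub_div]
  have hshift : ∑ j ∈ range (b + 2), ((b + 1).choose j : ℝ) * ((j : ℝ) / ((b : ℝ) + 1))
      * a (j - 1) * x j = ∑ j ∈ range (b + 1), (b.choose j : ℝ) * a j * x (j + 1) := by
    simp [sum_range_succ' _ (b + 1), choose_succ_succ_mul_div]
  rw [← hkeep, ← hshift, mul_sum, ← sum_add_distrib]
  exact sum_congr rfl fun j _ => by ring

/-- Inductive step for computing `vᵀ Ω_{b,0} u_b`:  here `b` plays the role of `b−1` in the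
natural-language statement, `Ω_{b,0}(x) = diag(x_{a_1},…,x_{a_{2^b}})`,
`u_1 ⊗ v = kron1 (1/√2) (−1/√2) v` and `w_1 ⊗ v = kron1 (1/√2) (1/√2) v`. -/
theorem kron_diagonal_dot_step (b : ℕ) (v : Fin (2 ^ b) → ℝ) (a : ℕ → ℝ)
    (ha : ∀ x : ℕ → ℝ,
      v ⬝ᵥ (Matrix.diagonal (fun i => x (avec b i))) *ᵥ uvec b
        = ((2 : ℝ) ^ b)⁻¹ * ∑ j ∈ Finset.range (b + 1), (Nat.choose b j : ℝ) * a j * x j) :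
    (∀ x : ℕ → ℝ,
      kron1 (Real.sqrt 2)⁻¹ (-(Real.sqrt 2)⁻¹) v ⬝ᵥ
          (Matrix.diagonal (fun i => x (avec (b + 1) i))) *ᵥ uvec (b + 1)
        = ((2 : ℝ) ^ (b + 1))⁻¹ * ∑ j ∈ Finset.range (b + 2), (Nat.choose (b + 1) j : ℝ)
            * ((((b : ℝ) + 1 - j) / ((b : ℝ) + 1)) * a j
                + ((j : ℝ) / ((b : ℝ) + 1)) * a (j - 1)) * x j) ∧
    (∀ x : ℕ → ℝ,
      kron1 (Real.sqrt 2)⁻¹ (Real.sqrt 2)⁻¹ v ⬝ᵥ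
          (Matrix.diagonal (fun i => x (avec (b + 1) i))) *ᵥ uvec (b + 1)
        = ((2 : ℝ) ^ (b + 1))⁻¹ * ∑ j ∈ Finset.range (b + 2), (Nat.choose (b + 1) j : ℝ)
            * ((((b : ℝ) + 1 - j) / ((b : ℝ) + 1)) * a j
                - ((j : ℝ) / ((b : ℝ) + 1)) * a (j - 1)) * x j) := by
  have hsqrt : (√2)⁻¹ * (√2)⁻¹ = (2 : ℝ)⁻¹ := by
    rw [← mul_inv, Real.mul_self_sqrt zero_le_two]
  refine ⟨fun x => ?_, fun x => ?_⟩
  · have hsum := sum_range_choose_succ_mul b a x 1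
    simp only [one_mul] at hsum
    rw [uvec_succ, kron1_dotProduct_diagonal_avec_mulVec_kron1, ha, ha (fun j => x (j + 1)), hsum]
    linear_combination ((2 : ℝ) ^ b)⁻¹ * (∑ j ∈ range (b + 1), (b.choose j : ℝ) * a j * x j
      + ∑ j ∈ range (b + 1), (b.choose j : ℝ) * a j * x (j + 1)) * hsqrt
  · have hsum := sum_range_choose_succ_mul b a x (-1)
    simp only [neg_one_mul, ← sub_eq_add_neg] at hsum
    rw [uvec_succ, kron1_dotProduct_diagonal_avec_mulVec_kron1, ha, ha (fun j => x (j + 1)), hsum]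
    linear_combination ((2 : ℝ) ^ b)⁻¹ * (∑ j ∈ range (b + 1), (b.choose j : ℝ) * a j * x j
      - ∑ j ∈ range (b + 1), (b.choose j : ℝ) * a j * x (j + 1)) * hsqrt
end

section
/- Consider the lightbulb process on n bulbs with switch pattern 𝐬 = (s_1,…,s_k) and all bulbs initially off, and for l ∈ {1,…,k} and α, β ≥ 0 let g^{(l)}_{α,β,𝐬} = P(X_1 = ⋯ = X_{α+β} = 0, X_{l,1} = ⋯ = X_{l,α} = 0, X_{l,α+1} = ⋯ = X_{l,α+β} = 1). Then g^{(l)}_{α,β,𝐬} = f_{α,β,𝐬_l} · (n − s_l)_α · (s_l)_β / (n)_{α+β}, where 𝐬_l denotes 𝐬 with its l-th component deleted and f_{α,β,𝐬_l} is the probability that bulbs 1 through α+β are all off at the terminal time of the lightbulb process with switch pattern 𝐬_l started from initial states X_{01} = ⋯ = X_{0α} = 0, X_{0,α+1} = ⋯ = X_{0,α+β} = 1. -/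
open Finset

/-- Number of switch arrays for pattern `s` under which bulbs `1,…,α+β` all end up off,
when bulbs `1,…,α` start off and bulbs `α+1,…,α+β` start on. -/
def fCount (n k : ℕ) (s : Fin k → ℕ) (α β : ℕ) : ℕ :=
  ((validArrays n k s).filter (fun e => ∀ j : Fin n, (j : ℕ) < α + β →
    ((if (j : ℕ) < α then 0 else 1)
      + (Finset.univ.filter (fun r => e r j = true)).card) % 2 = 0)).card

/-- Number of switch arrays for pattern `s` (all bulbs initially off) under which bulbs
`1,…,α+β` all end up off, bulbs `1,…,α` have stage-`l` switch value `0` and bulbs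
`α+1,…,α+β` have stage-`l` switch value `1`. -/
def gCount (n k : ℕ) (s : Fin k → ℕ) (l : Fin k) (α β : ℕ) : ℕ :=
  ((validArrays n k s).filter (fun e =>
    (∀ j : Fin n, (j : ℕ) < α + β →
      (Finset.univ.filter (fun r => e r j = true)).card % 2 = 0) ∧
    (∀ j : Fin n, (j : ℕ) < α → e l j = false) ∧
    (∀ j : Fin n, α ≤ (j : ℕ) ∧ (j : ℕ) < α + β → e l j = true))).card

lemma card_filter_split {n k : ℕ} (l : Fin (k+1))
    (P : (Fin n → Bool) → Prop) [DecidablePred P]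
    (Q : (Fin k → Fin n → Bool) → Prop) [DecidablePred Q]
    (R : (Fin (k+1) → Fin n → Bool) → Prop) [DecidablePred R]
    (h : ∀ e, R e ↔ P (e l) ∧ Q (fun r => e (l.succAbove r))) :
    (univ.filter R).card = (univ.filter P).card * (univ.filter Q).card := by
  rw [← Finset.card_product]
  refine Finset.card_bij' (fun e _ => (e l, fun r => e (l.succAbove r)))
    (fun p _ => l.insertNth p.1 p.2) ?_ ?_ ?_ ?_
  · intro e he
    simp only [mem_filter, mem_univ, true_and] at he
    rw [h e] at he
    simp only [Finset.mem_product, mem_filter, mem_univ, true_and]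
    exact he
  · intro p hp
    simp only [Finset.mem_product, mem_filter, mem_univ, true_and] at hp
    simp only [mem_filter, mem_univ, true_and, h, Fin.insertNth_apply_same,
      Fin.insertNth_apply_succAbove]
    exact hp
  · intro e _
    exact Fin.insertNth_self_removeNth l e
  · intro p _
    simp

lemma card_filter_val_Ico (n a b : ℕ) (hb : b ≤ n) :
    (univ.filter (fun j : Fin n => a ≤ (j:ℕ) ∧ (j:ℕ) < b)).card = b - a := by
  rw [← Nat.card_Ico a b]
  refine Finset.card_bij (fun j _ => (j : ℕ)) ?_ ?_ ?_
  · intro j hj; simp only [mem_filter, mem_univ, true_and] at hj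
    simp [Finset.mem_Ico, hj.1, hj.2]
  · intro j1 h1 j2 h2 h; exact Fin.val_injective h
  · intro x hx
    rw [Finset.mem_Ico] at hx
    exact ⟨⟨x, lt_of_lt_of_le hx.2 hb⟩, by simp [hx.1, hx.2], rfl⟩

lemma card_filter_val_le (n b : ℕ) :
    (univ.filter (fun j : Fin n => b ≤ (j:ℕ))).card = n - b := by
  rw [← Nat.card_Ico b n]
  refine Finset.card_bij (fun j _ => (j : ℕ)) ?_ ?_ ?_
  · intro j hj; simp only [mem_filter, mem_univ, true_and] at hj
    simp [Finset.mem_Ico, hj, j.isLt]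
  · intro j1 h1 j2 h2 h; exact Fin.val_injective h
  · intro x hx
    rw [Finset.mem_Ico] at hx
    exact ⟨⟨x, hx.2⟩, by simp [hx.1], rfl⟩

lemma cardRow (n α β m : ℕ) (hab : α + β ≤ n) :
    (univ.filter (fun w : Fin n → Bool =>
      (univ.filter (fun j => w j = true)).card = m ∧
      (∀ j : Fin n, (j:ℕ) < α → w j = false) ∧
      (∀ j : Fin n, α ≤ (j:ℕ) ∧ (j:ℕ) < α+β → w j = true))).card
    = if β ≤ m then (n - α - β).choose (m - β) else 0 := by
  split_ifs with hβ
  · -- bijection with powersetCard (m-β) of {j | α+β ≤ j}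
    have hcard : (univ.filter (fun j : Fin n => α+β ≤ (j:ℕ))).card = n - (α+β) :=
      card_filter_val_le n (α+β)
    rw [show n - α - β = n - (α+β) by omega, ← hcard,
      ← Finset.card_powersetCard (m-β) (univ.filter (fun j : Fin n => α+β ≤ (j:ℕ)))]
    refine Finset.card_bij' (fun w _ => univ.filter (fun j : Fin n => α+β ≤ (j:ℕ) ∧ w j = true))
      (fun T _ => fun j => decide ((α ≤ (j:ℕ) ∧ (j:ℕ) < α+β) ∨ j ∈ T)) ?_ ?_ ?_ ?_
    · intro w hw
      simp only [mem_filter, mem_univ, true_and] at hw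
      obtain ⟨hm, hlo, hmid⟩ := hw
      rw [Finset.mem_powersetCard]
      constructor
      · intro j hj; simp only [mem_filter, mem_univ, true_and] at hj ⊢; exact hj.1
      · have hsplit : univ.filter (fun j : Fin n => w j = true)
            = (univ.filter (fun j : Fin n => α ≤ (j:ℕ) ∧ (j:ℕ) < α+β))
              ∪ (univ.filter (fun j : Fin n => α+β ≤ (j:ℕ) ∧ w j = true)) := by
          ext j
          simp only [mem_filter, mem_univ, true_and, Finset.mem_union]
          constructor
          · intro hj
            rcases lt_or_ge (j:ℕ) (α+β) with h1 | h1
            · rcases lt_or_ge (j:ℕ) α with h2 | h2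
              · exact absurd hj (by simp [hlo j h2])
              · exact Or.inl ⟨h2, h1⟩
            · exact Or.inr ⟨h1, hj⟩
          · rintro (hj | hj)
            · exact hmid j hj
            · exact hj.2
        have hdisj : Disjoint (univ.filter (fun j : Fin n => α ≤ (j:ℕ) ∧ (j:ℕ) < α+β))
            (univ.filter (fun j : Fin n => α+β ≤ (j:ℕ) ∧ w j = true)) := by
          rw [Finset.disjoint_left]
          intro j hj1 hj2
          simp only [mem_filter, mem_univ, true_and] at hj1 hj2
          omega
        have hcu := congrArg Finset.card hsplit
        rw [hm, Finset.card_union_of_disjoint hdisj, card_filter_val_Ico n α (α+β) hab,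
          show α+β-α = β by omega] at hcu
        show #(filter (fun j : Fin n => α + β ≤ (j:ℕ) ∧ w j = true) univ) = m - β
        rw [hcu, Nat.add_sub_cancel_left]
    · intro T hT
      rw [Finset.mem_powersetCard] at hT
      obtain ⟨hTsub, hTcard⟩ := hT
      have hTge : ∀ j ∈ T, α+β ≤ (j:ℕ) := by
        intro j hj; have := hTsub hj; simpa using this
      simp only [mem_filter, mem_univ, true_and]
      refine ⟨?_, ?_, ?_⟩
      · have hsplit : univ.filter (fun j : Fin n =>
            (decide ((α ≤ (j:ℕ) ∧ (j:ℕ) < α+β) ∨ j ∈ T)) = true)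
            = (univ.filter (fun j : Fin n => α ≤ (j:ℕ) ∧ (j:ℕ) < α+β)) ∪ T := by
          ext j
          simp only [mem_filter, mem_univ, true_and, Finset.mem_union, decide_eq_true_eq]
        rw [hsplit, Finset.card_union_of_disjoint, card_filter_val_Ico n α (α+β) hab, hTcard]
        · omega
        · rw [Finset.disjoint_left]
          intro j hj1 hj2
          simp only [mem_filter, mem_univ, true_and] at hj1
          have := hTge j hj2
          omega
      · intro j hj
        simp only [decide_eq_false_iff_not]
        rintro (h1 | h1)
        · omega
        · have := hTge j h1; omega
      · intro j hj
        simp [hj]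
    · intro w hw
      simp only [mem_filter, mem_univ, true_and] at hw
      obtain ⟨hm, hlo, hmid⟩ := hw
      funext j
      simp only [mem_filter, mem_univ, true_and]
      rcases lt_or_ge (j:ℕ) α with h1 | h1
      · rw [hlo j h1]
        simp only [decide_eq_false_iff_not]
        rintro (h2 | h2)
        · omega
        · exact absurd h2.2 (by simp)
      · rcases lt_or_ge (j:ℕ) (α+β) with h2 | h2
        · rw [hmid j ⟨h1, h2⟩]
          simp only [decide_eq_true_eq]
          exact Or.inl ⟨h1, h2⟩
        · cases hwj : w j
          · simp only [decide_eq_false_iff_not]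
            rintro (h3 | h3)
            · omega
            · exact absurd h3.2 (by simp)
          · simp only [decide_eq_true_eq]
            exact Or.inr ⟨h2, trivial⟩
    · intro T hT
      rw [Finset.mem_powersetCard] at hT
      have hTge : ∀ j ∈ T, α+β ≤ (j:ℕ) := by
        intro j hj; have := hT.1 hj; simpa using this
      ext j
      simp only [mem_filter, mem_univ, true_and, decide_eq_true_eq]
      constructor
      · rintro ⟨h1, (h2 | h2)⟩
        · omega
        · exact h2
      · intro hj
        exact ⟨hTge j hj, Or.inr hj⟩
  · -- empty
    rw [Finset.card_eq_zero, Finset.filter_eq_empty_iff]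
    intro w _
    rintro ⟨hm, hlo, hmid⟩
    have hsub : (univ.filter (fun j : Fin n => α ≤ (j:ℕ) ∧ (j:ℕ) < α+β))
        ⊆ univ.filter (fun j : Fin n => w j = true) := by
      intro j hj
      simp only [mem_filter, mem_univ, true_and] at hj ⊢
      exact hmid j hj
    have := Finset.card_le_card hsub
    rw [card_filter_val_Ico n α (α+β) hab, hm] at this
    omega

open Nat in
lemma keyNat_s16 (n α β m : ℕ) (hm : m ≤ n) (hab : α + β ≤ n) :
    (if β ≤ m then (n - α - β).choose (m - β) else 0) * n.descFactorial (α+β)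
      = (n - m).descFactorial α * (m.descFactorial β) * n.choose m := by
  split_ifs with hβ
  · rcases le_or_gt (α + m) n with hnm | hnm
    · have h1 : n.choose m * m ! * (n-m)! = n ! := Nat.choose_mul_factorial_mul_factorial hm
      have h2 : (m-β)! * m.descFactorial β = m ! := Nat.factorial_mul_descFactorial hβ
      have h3 : (n-m-α)! * (n-m).descFactorial α = (n-m)! :=
        Nat.factorial_mul_descFactorial (show α ≤ n - m by omega)
      have h4 : (n-α-β)! * n.descFactorial (α+β) = n ! := by
        have := Nat.factorial_mul_descFactorial (show α+β ≤ n from hab)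
        rwa [show n - (α+β) = n-α-β by omega] at this
      have h5 : (n-α-β).choose (m-β) * (m-β)! * (n-m-α)! = (n-α-β)! := by
        have := Nat.choose_mul_factorial_mul_factorial (show m-β ≤ n-α-β by omega)
        rwa [show n-α-β - (m-β) = n-m-α by omega] at this
      have hK : 0 < (m-β)! * (n-m-α)! := Nat.mul_pos (Nat.factorial_pos _) (Nat.factorial_pos _)
      apply Nat.eq_of_mul_eq_mul_right hK
      calc (n-α-β).choose (m-β) * n.descFactorial (α+β) * ((m-β)! * (n-m-α)!)
          = ((n-α-β).choose (m-β) * (m-β)! * (n-m-α)!) * n.descFactorial (α+β) := by ring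
        _ = (n-α-β)! * n.descFactorial (α+β) := by rw [h5]
        _ = n ! := h4
        _ = n.choose m * m ! * (n-m)! := h1.symm
        _ = n.choose m * ((m-β)! * m.descFactorial β) * ((n-m-α)! * (n-m).descFactorial α) := by
            rw [h2, h3]
        _ = (n-m).descFactorial α * (m.descFactorial β) * n.choose m * ((m-β)! * (n-m-α)!) := by
            ring
    · rw [Nat.choose_eq_zero_of_lt (by omega),
        Nat.descFactorial_eq_zero_iff_lt.2 (show n - m < α by omega)]
      simp
  · rw [Nat.descFactorial_eq_zero_iff_lt.2 (show m < β by omega)]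
    simp

lemma cardWeight (n m : ℕ) :
    (univ.filter (fun w : Fin n → Bool =>
      (univ.filter (fun j => w j = true)).card = m)).card = n.choose m := by
  have h := cardRow n 0 0 m (Nat.zero_le n)
  rw [if_pos (Nat.zero_le m)] at h
  simp only [Nat.sub_zero] at h
  rw [← h]
  congr 1
  apply Finset.filter_congr
  intro w _
  constructor
  · intro h'
    exact ⟨h', fun j hj => absurd hj (Nat.not_lt_zero _), fun j hj => absurd hj.2 (Nat.not_lt_zero _)⟩
  · exact fun h' => h'.1


/-- `g^{(l)}_{α,β,𝐬} = f_{α,β,𝐬_l} · (n − s_l)_α (s_l)_β / (n)_{α+β}`, where `𝐬_l` is the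
pattern `𝐬` with its `l`-th component deleted. -/
theorem lightbulb_g_eq_f_mul (n k : ℕ) (hn : 0 < n) (s : Fin (k + 1) → ℕ)
    (hs : ∀ r, s r ≤ n) (l : Fin (k + 1)) (α β : ℕ) (hab : α + β ≤ n) :
    (gCount n (k + 1) s l α β : ℝ) / ((validArrays n (k + 1) s).card : ℝ)
      = ((fCount n k (fun r => s (l.succAbove r)) α β : ℝ)
            / ((validArrays n k (fun r => s (l.succAbove r))).card : ℝ))
        * (((n - s l).descFactorial α : ℝ) * ((s l).descFactorial β : ℝ)
            / (n.descFactorial (α + β) : ℝ)) := by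
  have hsplitcard : ∀ (e : Fin (k+1) → Fin n → Bool) (j : Fin n),
      (univ.filter (fun r : Fin (k+1) => e r j = true)).card
        = (if e l j = true then 1 else 0)
          + (univ.filter (fun r : Fin k => e (l.succAbove r) j = true)).card := by
    intro e j
    rw [Finset.card_filter, Finset.card_filter, Fin.sum_univ_succAbove _ l]
  -- Step 1: validArrays splits
  have hV : (validArrays n (k+1) s).card
      = (univ.filter (fun w : Fin n → Bool =>
          (univ.filter (fun j => w j = true)).card = s l)).card
        * (validArrays n k (fun r => s (l.succAbove r))).card := by
    apply card_filter_split l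
    intro e
    exact Fin.forall_iff_succAbove l
  -- Step 2: gCount splits
  have hG : gCount n (k+1) s l α β
      = (univ.filter (fun w : Fin n → Bool =>
          (univ.filter (fun j => w j = true)).card = s l ∧
          (∀ j : Fin n, (j:ℕ) < α → w j = false) ∧
          (∀ j : Fin n, α ≤ (j:ℕ) ∧ (j:ℕ) < α+β → w j = true))).card
        * fCount n k (fun r => s (l.succAbove r)) α β := by
    rw [gCount, fCount, validArrays, validArrays, Finset.filter_filter, Finset.filter_filter]
    apply card_filter_split l
    intro e
    constructor
    · rintro ⟨hvalid, hpar, hlo, hmid⟩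
      obtain ⟨hvl, hvrest⟩ := (Fin.forall_iff_succAbove l).1 hvalid
      refine ⟨⟨hvl, hlo, hmid⟩, hvrest, ?_⟩
      intro j hj
      have hp := hpar j hj
      rw [hsplitcard e j] at hp
      rcases lt_or_ge (j:ℕ) α with h1 | h1
      · rw [hlo j h1] at hp
        rw [if_pos h1]
        simpa using hp
      · rw [hmid j ⟨h1, hj⟩] at hp
        rw [if_neg (Nat.not_lt.2 h1)]
        simpa using hp
    · rintro ⟨⟨hvl, hlo, hmid⟩, hvrest, hf⟩
      refine ⟨(Fin.forall_iff_succAbove l).2 ⟨hvl, hvrest⟩, ?_, hlo, hmid⟩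
      intro j hj
      have hp := hf j hj
      rw [hsplitcard e j]
      rcases lt_or_ge (j:ℕ) α with h1 | h1
      · rw [hlo j h1]
        rw [if_pos h1] at hp
        simpa using hp
      · rw [hmid j ⟨h1, hj⟩]
        rw [if_neg (Nat.not_lt.2 h1)] at hp
        simpa using hp
  have hA := cardRow n α β (s l) hab
  have hW := cardWeight n (s l)
  rw [hG, hA, hV, hW]
  have hC : (0:ℝ) < (n.choose (s l) : ℝ) := by
    exact_mod_cast Nat.choose_pos (hs l)
  have hD : (0:ℝ) < (n.descFactorial (α+β) : ℝ) := by
    have : n.descFactorial (α+β) ≠ 0 := by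
      rw [Ne, Nat.descFactorial_eq_zero_iff_lt]
      exact Nat.not_lt.2 hab
    exact_mod_cast Nat.pos_of_ne_zero this
  have hAC : ((if β ≤ s l then (n - α - β).choose (s l - β) else 0 : ℕ) : ℝ)
      / (n.choose (s l) : ℝ)
      = ((n - s l).descFactorial α : ℝ) * ((s l).descFactorial β : ℝ)
        / (n.descFactorial (α + β) : ℝ) := by
    rw [div_eq_div_iff hC.ne' hD.ne']
    exact_mod_cast keyNat_s16 n α β (s l) (hs l) hab
  rw [Nat.cast_mul, Nat.cast_mul, mul_div_mul_comm, hAC]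
  ring
end

section
/- For all even n ≥ 6 with 𝐬 = 𝐧_{n/2}, and for all odd n = 2m+1 ≥ 7 with 𝐬 ∈ {𝐧_m, 𝐧_{m+1}, 𝐧_{m,m+1}}: |λ_{n,2,𝐬}| ≤ e^{−n} and |λ_{n,4,𝐬}| ≤ (1/2)e^{−n}. Moreover, for all odd n = 2m+1 ≥ 7: |λ̄_{n,2,𝐧_m}| ≤ e^{−n} and |λ̄_{n,4,𝐧_m}| ≤ (1/2)e^{−n}, where λ̄_{n,b,𝐧_m} = (Π_{1≤r≤n, r∉{m,m+1}} λ_{n,b,r})·(λ_{n,b,m} + λ_{n,b,m+1})/2. -/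
open Finset

/-- `λ_{n,b,𝐧_l}`, where `𝐧_l` is the pattern `(1,…,n)` with the entry `l` deleted. -/
noncomputable def lamDel (n b l : ℕ) : ℝ := ∏ r ∈ (Finset.Icc 1 n).erase l, lam n b r

/-- `λ_{n,b,𝐧_{l₁,l₂}}`, where `𝐧_{l₁,l₂}` is `(1,…,n)` with entries `l₁, l₂` deleted. -/
noncomputable def lamDel2 (n b l₁ l₂ : ℕ) : ℝ :=
  ∏ r ∈ ((Finset.Icc 1 n).erase l₁).erase l₂, lam n b r

/-- `λ̄_{n,b,𝐧_m} = (Π_{1≤r≤n, r∉{m,m+1}} λ_{n,b,r})·(λ_{n,b,m} + λ_{n,b,m+1})/2`. -/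
noncomputable def lamBarDel (n b m : ℕ) : ℝ :=
  (∏ r ∈ Finset.Icc 1 n \ {m, m + 1}, lam n b r) * ((lam n b m + lam n b (m + 1)) / 2)


/-! For `b ∈ {2, 4}` the eigenvalue `λ_{n,b,s}` equals `1 - q` with `q` a polynomial in
`u = s(n - s)` divided by `(n)_b`, and for `n ≥ 14` it lies in `[-1/13, 1]`. On that range
`|1 - q| ≤ exp(-(q + q²/2 + ⋯ + qᵏ/k))` for `k ≤ 4`: a partial sum of `-log(1 - q)`, and for `q > 1`
the left side is at most `1/13`. So a product of eigenvalues is at most `exp` of minus a sum of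
polynomials in `u`. With `k = 4` for `b = 2` and `k = 2` for `b = 4`, Faulhaber's formulas evaluate
these sums exactly, and they exceed `n` (resp. `n + log 2`) for `n ≥ 17` even after two factors are
deleted. The cases `n ≤ 16` are exact rational computations, and the remaining odd patterns differ
from `𝐧_{m,m+1}` by one factor of absolute value at most `1`. -/

noncomputable def negLogPartialSum (k : ℕ) (q : ℝ) : ℝ := ∑ i ∈ range k, q ^ (i + 1) / (i + 1)

section NegLogPartialSum

variable {k : ℕ} {q : ℝ}

theorem negLogPartialSum_le_neg_log_one_sub (hq₀ : 0 ≤ q) (hq₁ : q < 1) :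
    negLogPartialSum k q ≤ -Real.log (1 - q) :=
  sum_le_hasSum (range k) (fun i _ => by positivity)
    (Real.hasSum_pow_div_log_of_abs_lt_one (by rwa [abs_of_nonneg hq₀]))

theorem negLogPartialSum_mono_left {l : ℕ} (hkl : k ≤ l) (hq : 0 ≤ q) :
    negLogPartialSum k q ≤ negLogPartialSum l q :=
  sum_le_sum_of_subset_of_nonneg (range_subset_range.2 hkl) fun _ _ _ => by positivity

theorem negLogPartialSum_mono_right {r : ℝ} (hq : 0 ≤ q) (hqr : q ≤ r) :
    negLogPartialSum k q ≤ negLogPartialSum k r :=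
  sum_le_sum fun _ _ => by gcongr

theorem one_sub_le_exp_neg_negLogPartialSum (hq₀ : 0 ≤ q) (hq₁ : q ≤ 1) :
    1 - q ≤ Real.exp (-negLogPartialSum k q) := by
  rcases hq₁.eq_or_lt with rfl | hq₁
  · simpa using (Real.exp_pos _).le
  calc 1 - q = Real.exp (Real.log (1 - q)) := (Real.exp_log (by linarith)).symm
    _ ≤ Real.exp (-negLogPartialSum k q) := by
      gcongr; linarith [negLogPartialSum_le_neg_log_one_sub (k := k) hq₀ hq₁]

end NegLogPartialSum

theorem exp_five_halves_le : Real.exp (5 / 2) ≤ 13 := by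
  have he := Real.exp_one_lt_d9
  have hhalf : Real.exp (1 / 2) ^ 2 = Real.exp 1 := by rw [← Real.exp_nat_mul]; norm_num
  have hhalf_le : Real.exp (1 / 2) ≤ 33 / 20 := by nlinarith [Real.exp_pos (1 / 2)]
  have hsplit : Real.exp (5 / 2) = Real.exp 1 ^ 2 * Real.exp (1 / 2) := by
    rw [← Real.exp_nat_mul, ← Real.exp_add]; norm_num
  rw [hsplit]
  nlinarith [Real.exp_pos 1, Real.exp_pos (1 / 2)]

theorem abs_le_exp_neg_negLogPartialSum {k : ℕ} (hk : k ≤ 4) {t : ℝ} (ht₀ : -(1 / 13) ≤ t)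
    (ht₁ : t ≤ 1) : |t| ≤ Real.exp (-negLogPartialSum k (1 - t)) := by
  rcases le_total 0 t with ht | ht
  · rw [abs_of_nonneg ht]
    have h := one_sub_le_exp_neg_negLogPartialSum (k := k) (q := 1 - t) (by linarith) (by linarith)
    rwa [sub_sub_cancel] at h
  have h4 : negLogPartialSum 4 (14 / 13) ≤ 5 / 2 := by
    norm_num [negLogPartialSum, sum_range_succ]
  calc |t| ≤ 1 / 13 := by rw [abs_of_nonpos ht]; linarith
    _ ≤ Real.exp (-(5 / 2)) := by
      rw [Real.exp_neg, ← one_div]; gcongr; exact exp_five_halves_le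
    _ ≤ Real.exp (-negLogPartialSum k (1 - t)) := by
      gcongr
      calc negLogPartialSum k (1 - t) ≤ negLogPartialSum 4 (1 - t) :=
            negLogPartialSum_mono_left hk (by linarith)
        _ ≤ negLogPartialSum 4 (14 / 13) := negLogPartialSum_mono_right (by linarith) (by linarith)
        _ ≤ 5 / 2 := h4

theorem abs_prod_le_exp_neg_sum {ι : Type*} {S : Finset ι} {f w : ι → ℝ}
    (h : ∀ i ∈ S, |f i| ≤ Real.exp (-w i)) : |∏ i ∈ S, f i| ≤ Real.exp (-∑ i ∈ S, w i) := by
  rw [abs_prod, ← sum_neg_distrib, Real.exp_sum]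
  exact prod_le_prod (fun _ _ => abs_nonneg _) h

theorem sum_sub_card_mul_le_sum_of_subset {ι : Type*} [DecidableEq ι] {S T : Finset ι}
    {f : ι → ℝ} {c : ℝ} (hST : S ⊆ T) (hf : ∀ i ∈ T \ S, f i ≤ c) :
    ∑ i ∈ T, f i - #(T \ S) * c ≤ ∑ i ∈ S, f i := by
  have h := sum_le_card_nsmul (T \ S) f c hf
  rw [nsmul_eq_mul] at h
  linarith [sum_sdiff hST (f := f)]

theorem card_sdiff_erase_erase_le {α : Type*} [DecidableEq α] (s : Finset α) (a b : α) :
    #(s \ ((s.erase a).erase b)) ≤ 2 :=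
  calc #(s \ ((s.erase a).erase b)) ≤ #{a, b} :=
        card_le_card fun x hx => by
          simp only [mem_sdiff, mem_erase, mem_insert, mem_singleton] at hx ⊢; tauto
    _ ≤ 2 := card_le_two

theorem lam_two {n : ℕ} (s : ℕ) (hn : 2 ≤ n) :
    lam n 2 s = 1 - 4 * (s * (n - s)) / (n * (n - 1)) := by
  have h1 : (1 : ℝ) < n := by exact_mod_cast hn
  have : (n : ℝ) ≠ 0 := by linarith
  have : (n : ℝ) - 1 ≠ 0 := by linarith
  simp only [lam, ← descPochhammer_eval_eq_descFactorial, descPochhammer_eval_eq_prod_range,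
    sum_range_succ, prod_range_succ, sum_range_zero, prod_range_zero, Nat.choose, Nat.cast_zero,
    Nat.cast_one]
  field_simp
  ring

theorem lam_four {n : ℕ} (s : ℕ) (hn : 4 ≤ n) :
    lam n 4 s = 1 - 4 * (s * (n - s)) * (2 * n ^ 2 - 6 * n + 8 - 4 * (s * (n - s))) /
      (n * (n - 1) * (n - 2) * (n - 3)) := by
  have h3 : (3 : ℝ) < n := by exact_mod_cast hn
  have : (n : ℝ) ≠ 0 := by linarith
  have : (n : ℝ) - 1 ≠ 0 := by linarith
  have : (n : ℝ) - 2 ≠ 0 := by linarith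
  have : (n : ℝ) - 3 ≠ 0 := by linarith
  simp only [lam, ← descPochhammer_eval_eq_descFactorial, descPochhammer_eval_eq_prod_range,
    sum_range_succ, prod_range_succ, sum_range_zero, prod_range_zero, Nat.choose, Nat.cast_zero,
    Nat.cast_one, Nat.cast_ofNat]
  field_simp
  ring

theorem four_mul_mul_sub_le_sq (s n : ℝ) : 4 * (s * (n - s)) ≤ n ^ 2 := by
  nlinarith [sq_nonneg (n - 2 * s)]

section LamBounds

variable {n b s : ℕ}

theorem lam_le_one (hb : b = 2 ∨ b = 4) (hn : 4 ≤ n) (hs : s ≤ n) : lam n b s ≤ 1 := by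
  have h4 : (4 : ℝ) ≤ n := by exact_mod_cast hn
  have hs' : (s : ℝ) ≤ n := by exact_mod_cast hs
  have hu : 0 ≤ (s : ℝ) * (n - s) := mul_nonneg s.cast_nonneg (by linarith)
  rcases hb with rfl | rfl
  · rw [lam_two s (by omega), sub_le_self_iff]
    exact div_nonneg (by positivity) (mul_nonneg (by linarith) (by linarith))
  · rw [lam_four s hn, sub_le_self_iff]
    refine div_nonneg (mul_nonneg (by positivity) ?_) ?_
    · nlinarith [four_mul_mul_sub_le_sq s n]
    · exact mul_nonneg (mul_nonneg (mul_nonneg (by linarith) (by linarith)) (by linarith))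
        (by linarith)

-- With `w = n(n - 3)` one has `(n)₄ = w(w + 2)`, and `4u(2n² - 6n + 8 - 4u) ≤ (w + 4)²` by AM-GM.
theorem neg_le_lam_of_le {c : ℝ} (hb : b = 2 ∨ b = 4) (hn : 5 ≤ n)
    (h₂ : (n : ℝ) ≤ (1 + c) * (n - 1))
    (h₄ : (n * (n - 3) + 4 : ℝ) ^ 2 ≤ (1 + c) * (n * (n - 3) * (n * (n - 3) + 2))) :
    -c ≤ lam n b s := by
  have h5 : (5 : ℝ) ≤ n := by exact_mod_cast hn
  rcases hb with rfl | rfl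
  · rw [lam_two s (by omega), neg_le_sub_iff_le_add, div_le_iff₀ (by nlinarith)]
    nlinarith [four_mul_mul_sub_le_sq s n]
  · have hD : 0 < (n : ℝ) * (n - 1) * (n - 2) * (n - 3) :=
      mul_pos (mul_pos (mul_pos (by linarith) (by linarith)) (by linarith)) (by linarith)
    rw [lam_four s (by omega), neg_le_sub_iff_le_add, div_le_iff₀ hD]
    nlinarith [sq_nonneg ((n : ℝ) ^ 2 - 3 * n + 4 - 4 * (s * (n - s)))]

theorem neg_one_le_lam (hb : b = 2 ∨ b = 4) (hn : 5 ≤ n) : -1 ≤ lam n b s := by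
  have h5 : (5 : ℝ) ≤ n := by exact_mod_cast hn
  have hw : (10 : ℝ) ≤ n * (n - 3) := by nlinarith
  exact neg_le_lam_of_le hb hn (by linarith) (by nlinarith)

theorem neg_one_div_thirteen_le_lam (hb : b = 2 ∨ b = 4) (hn : 14 ≤ n) :
    -(1 / 13) ≤ lam n b s := by
  have h14 : (14 : ℝ) ≤ n := by exact_mod_cast hn
  have hw : (154 : ℝ) ≤ n * (n - 3) := by nlinarith
  exact neg_le_lam_of_le hb (by omega) (by linarith) (by nlinarith)

theorem abs_lam_le_one (hb : b = 2 ∨ b = 4) (hn : 5 ≤ n) (hs : s ≤ n) : |lam n b s| ≤ 1 :=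
  abs_le.2 ⟨neg_one_le_lam hb hn, lam_le_one hb (by omega) hs⟩

end LamBounds

theorem abs_prod_lam_le_exp_neg {k b n : ℕ} (hk : k ≤ 4) (hb : b = 2 ∨ b = 4) (hn : 14 ≤ n)
    {S : Finset ℕ} (hS : S ⊆ Icc 1 n) :
    |∏ s ∈ S, lam n b s| ≤ Real.exp (-(∑ s ∈ Icc 1 n, negLogPartialSum k (1 - lam n b s) -
      #(Icc 1 n \ S) * negLogPartialSum k (14 / 13))) := by
  have hlam : ∀ s ∈ Icc 1 n, -(1 / 13) ≤ lam n b s ∧ lam n b s ≤ 1 := fun s hs =>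
    ⟨neg_one_div_thirteen_le_lam hb hn, lam_le_one hb (by omega) (mem_Icc.1 hs).2⟩
  refine (abs_prod_le_exp_neg_sum fun s hs => abs_le_exp_neg_negLogPartialSum hk
    (hlam s (hS hs)).1 (hlam s (hS hs)).2).trans (Real.exp_le_exp.2 (neg_le_neg ?_))
  refine sum_sub_card_mul_le_sum_of_subset hS fun s hs => ?_
  have := hlam s (sdiff_subset hs)
  exact negLogPartialSum_mono_right (by linarith) (by linarith)

theorem sum_Icc_natCast (n : ℕ) : ∑ s ∈ Icc 1 n, (s : ℝ) = n * (n + 1) / 2 := by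
  induction n with
  | zero => simp
  | succ n ih => rw [sum_Icc_succ_top (by omega), ih]; push_cast; ring

theorem sum_Icc_natCast_sq (n : ℕ) :
    ∑ s ∈ Icc 1 n, (s : ℝ) ^ 2 = n * (n + 1) * (2 * n + 1) / 6 := by
  induction n with
  | zero => simp
  | succ n ih => rw [sum_Icc_succ_top (by omega), ih]; push_cast; ring

theorem sum_Icc_natCast_pow_three (n : ℕ) : ∑ s ∈ Icc 1 n, (s : ℝ) ^ 3 = (n * (n + 1) / 2) ^ 2 := by
  induction n with
  | zero => simp
  | succ n ih => rw [sum_Icc_succ_top (by omega), ih]; push_cast; ring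

theorem sum_Icc_natCast_pow_four (n : ℕ) :
    ∑ s ∈ Icc 1 n, (s : ℝ) ^ 4 = n * (n + 1) * (2 * n + 1) * (3 * n ^ 2 + 3 * n - 1) / 30 := by
  induction n with
  | zero => simp
  | succ n ih => rw [sum_Icc_succ_top (by omega), ih]; push_cast; ring

theorem sum_Icc_natCast_pow_five (n : ℕ) :
    ∑ s ∈ Icc 1 n, (s : ℝ) ^ 5 = n ^ 2 * (n + 1) ^ 2 * (2 * n ^ 2 + 2 * n - 1) / 12 := by
  induction n with
  | zero => simp
  | succ n ih => rw [sum_Icc_succ_top (by omega), ih]; push_cast; ring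

theorem sum_Icc_natCast_pow_six (n : ℕ) : ∑ s ∈ Icc 1 n, (s : ℝ) ^ 6 =
    n * (n + 1) * (2 * n + 1) * (3 * n ^ 4 + 6 * n ^ 3 - 3 * n + 1) / 42 := by
  induction n with
  | zero => simp
  | succ n ih => rw [sum_Icc_succ_top (by omega), ih]; push_cast; ring

theorem sum_Icc_natCast_pow_seven (n : ℕ) : ∑ s ∈ Icc 1 n, (s : ℝ) ^ 7 =
    n ^ 2 * (n + 1) ^ 2 * (3 * n ^ 4 + 6 * n ^ 3 - n ^ 2 - 4 * n + 2) / 24 := by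
  induction n with
  | zero => simp
  | succ n ih => rw [sum_Icc_succ_top (by omega), ih]; push_cast; ring

theorem sum_Icc_natCast_pow_eight (n : ℕ) : ∑ s ∈ Icc 1 n, (s : ℝ) ^ 8 =
    n * (n + 1) * (2 * n + 1) *
      (5 * n ^ 6 + 15 * n ^ 5 + 5 * n ^ 4 - 15 * n ^ 3 - n ^ 2 + 9 * n - 3) / 90 := by
  induction n with
  | zero => simp
  | succ n ih => rw [sum_Icc_succ_top (by omega), ih]; push_cast; ring

section MulSubSums

variable (n : ℕ)

theorem sum_Icc_mul_sub : ∑ s ∈ Icc 1 n, (s * (n - s) : ℝ) = (n ^ 3 - n) / 6 := by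
  simp only [show ∀ s : ℝ, s * (n - s) = n * s - s ^ 2 by intro s; ring]
  rw [sum_sub_distrib, ← mul_sum, sum_Icc_natCast, sum_Icc_natCast_sq]
  ring

theorem sum_Icc_mul_sub_sq : ∑ s ∈ Icc 1 n, (s * (n - s) : ℝ) ^ 2 = (n ^ 5 - n) / 30 := by
  simp only [show ∀ s : ℝ, (s * (n - s)) ^ 2 = n ^ 2 * s ^ 2 - 2 * n * s ^ 3 + s ^ 4 by
    intro s; ring]
  rw [sum_add_distrib, sum_sub_distrib, ← mul_sum, ← mul_sum, sum_Icc_natCast_sq,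
    sum_Icc_natCast_pow_three, sum_Icc_natCast_pow_four]
  ring

theorem sum_Icc_mul_sub_pow_three :
    ∑ s ∈ Icc 1 n, (s * (n - s) : ℝ) ^ 3 = (3 * n ^ 7 + 7 * n ^ 3 - 10 * n) / 420 := by
  simp only [show ∀ s : ℝ, (s * (n - s)) ^ 3 =
    n ^ 3 * s ^ 3 - 3 * n ^ 2 * s ^ 4 + 3 * n * s ^ 5 - s ^ 6 by intro s; ring]
  rw [sum_sub_distrib, sum_add_distrib, sum_sub_distrib, ← mul_sum, ← mul_sum, ← mul_sum,
    sum_Icc_natCast_pow_three, sum_Icc_natCast_pow_four, sum_Icc_natCast_pow_five,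
    sum_Icc_natCast_pow_six]
  ring

theorem sum_Icc_mul_sub_pow_four :
    ∑ s ∈ Icc 1 n, (s * (n - s) : ℝ) ^ 4 = (n ^ 9 + 20 * n ^ 3 - 21 * n) / 630 := by
  simp only [show ∀ s : ℝ, (s * (n - s)) ^ 4 =
    n ^ 4 * s ^ 4 - 4 * n ^ 3 * s ^ 5 + 6 * n ^ 2 * s ^ 6 - 4 * n * s ^ 7 + s ^ 8 by intro s; ring]
  rw [sum_add_distrib, sum_sub_distrib, sum_add_distrib, sum_sub_distrib, ← mul_sum, ← mul_sum,
    ← mul_sum, ← mul_sum, sum_Icc_natCast_pow_four, sum_Icc_natCast_pow_five,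
    sum_Icc_natCast_pow_six, sum_Icc_natCast_pow_seven, sum_Icc_natCast_pow_eight]
  ring

end MulSubSums

theorem negLogPartialSum_four_div (u : ℝ) {N : ℝ} (hN : N ≠ 0) :
    negLogPartialSum 4 (4 * u / N) =
      (4 * N ^ 3 * u + 8 * N ^ 2 * u ^ 2 + 64 / 3 * N * u ^ 3 + 64 * u ^ 4) / N ^ 4 := by
  norm_num [negLogPartialSum, sum_range_succ]
  field_simp
  ring

theorem negLogPartialSum_two_div (u c : ℝ) {D : ℝ} (hD : D ≠ 0) :
    negLogPartialSum 2 (4 * u * (c - 4 * u) / D) =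
      (8 * D * c * u + (16 * c ^ 2 - 32 * D) * u ^ 2 - 128 * c * u ^ 3 + 256 * u ^ 4) /
        (2 * D ^ 2) := by
  norm_num [negLogPartialSum, sum_range_succ]
  field_simp
  ring

theorem add_five_le_sum_negLogPartialSum_lam_two {n : ℕ} (hn : 17 ≤ n) :
    n + 5 ≤ ∑ s ∈ Icc 1 n, negLogPartialSum 4 (1 - lam n 2 s) := by
  have h17 : (17 : ℝ) ≤ n := by exact_mod_cast hn
  have hN : (0 : ℝ) < n * (n - 1) := by nlinarith
  simp only [lam_two _ (show 2 ≤ n by omega), sub_sub_cancel, negLogPartialSum_four_div _ hN.ne']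
  rw [← sum_div, le_div_iff₀ (pow_pos hN 4)]
  simp only [sum_add_distrib, ← mul_sum]
  rw [sum_Icc_mul_sub, sum_Icc_mul_sub_sq, sum_Icc_mul_sub_pow_three, sum_Icc_mul_sub_pow_four,
    ← sub_nonneg]
  obtain ⟨k, rfl⟩ : ∃ k, n = k + 17 := ⟨n - 17, by omega⟩
  push_cast
  ring_nf
  positivity

theorem add_le_sum_negLogPartialSum_lam_four {n : ℕ} (hn : 17 ≤ n) :
    n + 41 / 10 ≤ ∑ s ∈ Icc 1 n, negLogPartialSum 2 (1 - lam n 4 s) := by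
  have h17 : (17 : ℝ) ≤ n := by exact_mod_cast hn
  have hD : (0 : ℝ) < n * (n - 1) * (n - 2) * (n - 3) :=
    mul_pos (mul_pos (mul_pos (by linarith) (by linarith)) (by linarith)) (by linarith)
  simp only [lam_four _ (show 4 ≤ n by omega), sub_sub_cancel,
    negLogPartialSum_two_div _ _ hD.ne']
  rw [← sum_div, le_div_iff₀ (by positivity)]
  simp only [sum_add_distrib, sum_sub_distrib, ← mul_sum]
  rw [sum_Icc_mul_sub, sum_Icc_mul_sub_sq, sum_Icc_mul_sub_pow_three, sum_Icc_mul_sub_pow_four,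
    ← sub_nonneg]
  obtain ⟨k, rfl⟩ : ∃ k, n = k + 17 := ⟨n - 17, by omega⟩
  push_cast
  ring_nf
  positivity

section LargeN

variable {n : ℕ} {S : Finset ℕ}

theorem abs_prod_lam_two_le_exp_neg (hn : 17 ≤ n) (hS : S ⊆ Icc 1 n)
    (hcard : #(Icc 1 n \ S) ≤ 2) : |∏ s ∈ S, lam n 2 s| ≤ Real.exp (-n) := by
  refine (abs_prod_lam_le_exp_neg (k := 4) le_rfl (Or.inl rfl) (by omega) hS).trans
    (Real.exp_le_exp.2 (neg_le_neg ?_))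
  have hdel : (#(Icc 1 n \ S) : ℝ) * negLogPartialSum 4 (14 / 13) ≤ 2 * (5 / 2) :=
    mul_le_mul (by exact_mod_cast hcard) (by norm_num [negLogPartialSum, sum_range_succ])
      (by norm_num [negLogPartialSum, sum_range_succ]) zero_le_two
  linarith [add_five_le_sum_negLogPartialSum_lam_two hn]

theorem abs_prod_lam_four_le_half_exp_neg (hn : 17 ≤ n) (hS : S ⊆ Icc 1 n)
    (hcard : #(Icc 1 n \ S) ≤ 2) : |∏ s ∈ S, lam n 4 s| ≤ 1 / 2 * Real.exp (-n) := by
  have hhalf : 1 / 2 * Real.exp (-n) = Real.exp (-(n + Real.log 2)) := by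
    rw [neg_add, Real.exp_add, Real.exp_neg (Real.log 2), Real.exp_log two_pos]; ring
  rw [hhalf]
  refine (abs_prod_lam_le_exp_neg (k := 2) (by norm_num) (Or.inr rfl) (by omega) hS).trans
    (Real.exp_le_exp.2 (neg_le_neg ?_))
  have hdel : (#(Icc 1 n \ S) : ℝ) * negLogPartialSum 2 (14 / 13) ≤ 2 * (5 / 3) :=
    mul_le_mul (by exact_mod_cast hcard) (by norm_num [negLogPartialSum, sum_range_succ])
      (by norm_num [negLogPartialSum, sum_range_succ]) zero_le_two
  linarith [add_le_sum_negLogPartialSum_lam_four hn, Real.log_two_lt_d9]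

end LargeN

theorem abs_le_mul_exp_neg_of_mul_pow_le {r c : ℝ} {n : ℕ}
    (h : |r| * 2.7182818286 ^ n ≤ c) : |r| ≤ c * Real.exp (-n) := by
  have he : Real.exp n ≤ 2.7182818286 ^ n := by
    rw [← Real.exp_one_pow]
    exact pow_le_pow_left₀ (Real.exp_pos 1).le Real.exp_one_lt_d9.le n
  rw [Real.exp_neg, ← div_eq_mul_inv, le_div_iff₀ (Real.exp_pos _)]
  exact (mul_le_mul_of_nonneg_left he (abs_nonneg r)).trans h

theorem abs_lamDel_middle_le (j : ℕ) (hj : 3 ≤ j) :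
    |lamDel (2 * j) 2 j| ≤ Real.exp (-(2 * j : ℕ)) ∧
      |lamDel (2 * j) 4 j| ≤ 1 / 2 * Real.exp (-(2 * j : ℕ)) := by
  rcases lt_or_ge 8 j with hj' | hj'
  · have hS : (Icc 1 (2 * j)).erase j ⊆ Icc 1 (2 * j) := erase_subset _ _
    have hcard : #(Icc 1 (2 * j) \ (Icc 1 (2 * j)).erase j) ≤ 2 := by
      rw [sdiff_erase_self (mem_Icc.2 ⟨by omega, by omega⟩), card_singleton]; norm_num
    exact ⟨abs_prod_lam_two_le_exp_neg (by omega) hS hcard,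
      abs_prod_lam_four_le_half_exp_neg (by omega) hS hcard⟩
  interval_cases j <;>
  refine ⟨(abs_le_mul_exp_neg_of_mul_pow_le (c := 1) ?_).trans_eq (one_mul _),
    abs_le_mul_exp_neg_of_mul_pow_le ?_⟩ <;>
  rw [lamDel, ← filter_ne', prod_filter, ← Ico_add_one_right_eq_Icc, prod_Ico_eq_prod_range] <;>
  norm_num [prod_range_succ, lam_two, lam_four]

theorem abs_lamDel2_middle_le (m : ℕ) (hm : 3 ≤ m) :
    |lamDel2 (2 * m + 1) 2 m (m + 1)| ≤ Real.exp (-(2 * m + 1 : ℕ)) ∧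
      |lamDel2 (2 * m + 1) 4 m (m + 1)| ≤ 1 / 2 * Real.exp (-(2 * m + 1 : ℕ)) := by
  rcases lt_or_ge 7 m with hm' | hm'
  · have hS : ((Icc 1 (2 * m + 1)).erase m).erase (m + 1) ⊆ Icc 1 (2 * m + 1) :=
      (erase_subset _ _).trans (erase_subset _ _)
    have hcard := card_sdiff_erase_erase_le (Icc 1 (2 * m + 1)) m (m + 1)
    exact ⟨abs_prod_lam_two_le_exp_neg (by omega) hS hcard,
      abs_prod_lam_four_le_half_exp_neg (by omega) hS hcard⟩
  interval_cases m <;>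
  refine ⟨(abs_le_mul_exp_neg_of_mul_pow_le (c := 1) ?_).trans_eq (one_mul _),
    abs_le_mul_exp_neg_of_mul_pow_le ?_⟩ <;>
  rw [lamDel2, ← filter_ne', ← filter_ne', filter_filter, prod_filter,
    ← Ico_add_one_right_eq_Icc, prod_Ico_eq_prod_range] <;>
  norm_num [prod_range_succ, lam_two, lam_four]

section OddPatterns

variable {n b m : ℕ}

theorem lamDel_eq_lam_mul_lamDel2 {l₁ l₂ : ℕ} (hne : l₂ ≠ l₁) (h₁ : 1 ≤ l₂) (h₂ : l₂ ≤ n) :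
    lamDel n b l₁ = lam n b l₂ * lamDel2 n b l₁ l₂ :=
  (mul_prod_erase _ _ (mem_erase.2 ⟨hne, mem_Icc.2 ⟨h₁, h₂⟩⟩)).symm

theorem lamDel2_comm (l₁ l₂ : ℕ) : lamDel2 n b l₁ l₂ = lamDel2 n b l₂ l₁ := by
  rw [lamDel2, lamDel2, erase_right_comm]

theorem lamBarDel_eq_mul_lamDel2 :
    lamBarDel n b m = (lam n b m + lam n b (m + 1)) / 2 * lamDel2 n b m (m + 1) := by
  rw [lamBarDel, lamDel2, mul_comm, sdiff_insert, sdiff_singleton_eq_erase, erase_right_comm]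

theorem abs_mul_le_of_abs_le_one {a x c : ℝ} (ha : |a| ≤ 1) (hx : |x| ≤ c) : |a * x| ≤ c := by
  rw [abs_mul]
  exact (mul_le_of_le_one_left (abs_nonneg x) ha).trans hx

theorem abs_odd_patterns_le {c : ℝ} (hb : b = 2 ∨ b = 4) (hn : n = 2 * m + 1) (hm : 2 ≤ m)
    (h : |lamDel2 n b m (m + 1)| ≤ c) :
    |lamDel n b m| ≤ c ∧ |lamDel n b (m + 1)| ≤ c ∧ |lamBarDel n b m| ≤ c := by
  have hlow := abs_lam_le_one (n := n) (s := m) hb (by omega) (by omega)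
  have hhigh := abs_lam_le_one (n := n) (s := m + 1) hb (by omega) (by omega)
  refine ⟨?_, ?_, ?_⟩
  · rw [lamDel_eq_lam_mul_lamDel2 (l₂ := m + 1) (by omega) (by omega) (by omega)]
    exact abs_mul_le_of_abs_le_one hhigh h
  · rw [lamDel_eq_lam_mul_lamDel2 (l₂ := m) (by omega) (by omega) (by omega), lamDel2_comm]
    exact abs_mul_le_of_abs_le_one hlow h
  · rw [lamBarDel_eq_mul_lamDel2]
    refine abs_mul_le_of_abs_le_one ?_ h
    rw [abs_le] at hlow hhigh ⊢
    constructor <;> linarith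

end OddPatterns

/-- Exponential bounds on the eigenvalue products of the lightbulb chain. -/
theorem lam_pattern_bounds :
    (∀ n : ℕ, 6 ≤ n → Even n →
      |lamDel n 2 (n / 2)| ≤ Real.exp (-(n : ℝ)) ∧
      |lamDel n 4 (n / 2)| ≤ (1 / 2) * Real.exp (-(n : ℝ))) ∧
    (∀ m n : ℕ, n = 2 * m + 1 → 7 ≤ n →
      (|lamDel n 2 m| ≤ Real.exp (-(n : ℝ)) ∧
        |lamDel n 4 m| ≤ (1 / 2) * Real.exp (-(n : ℝ))) ∧
      (|lamDel n 2 (m + 1)| ≤ Real.exp (-(n : ℝ)) ∧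
        |lamDel n 4 (m + 1)| ≤ (1 / 2) * Real.exp (-(n : ℝ))) ∧
      (|lamDel2 n 2 m (m + 1)| ≤ Real.exp (-(n : ℝ)) ∧
        |lamDel2 n 4 m (m + 1)| ≤ (1 / 2) * Real.exp (-(n : ℝ))) ∧
      (|lamBarDel n 2 m| ≤ Real.exp (-(n : ℝ)) ∧
        |lamBarDel n 4 m| ≤ (1 / 2) * Real.exp (-(n : ℝ)))) := by
  refine ⟨fun n hn ⟨j, hj⟩ => ?_, fun m n hn h7 => ?_⟩
  · obtain rfl : n = 2 * j := by omega
    rw [Nat.mul_div_cancel_left j two_pos]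
    exact abs_lamDel_middle_le j (by omega)
  · subst hn
    obtain ⟨h₂, h₄⟩ := abs_lamDel2_middle_le m (by omega)
    obtain ⟨h₂l, h₂r, h₂bar⟩ := abs_odd_patterns_le (Or.inl rfl) rfl (by omega) h₂
    obtain ⟨h₄l, h₄r, h₄bar⟩ := abs_odd_patterns_le (Or.inr rfl) rfl (by omega) h₄
    exact ⟨⟨h₂l, h₄l⟩, ⟨h₂r, h₄r⟩, ⟨h₂, h₄⟩, ⟨h₂bar, h₄bar⟩⟩
end
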